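/- arXiv:1103.2673 — 5 statements merged into one kernel-verified Lean document; each statement's English description precedes it below -/
import Mathlib

section
/- Let K be a field equipped with a valuation v : K → ℝ ∪ {∞} (so v(ab) = v(a) + v(b), v(a+b) ≥ min(v(a), v(b)), and v(a) = ∞ iff a = 0). Let f ∈ K[x₁,…,xₙ] be a nonzero polynomial and p ∈ (K*)ⁿ a point with f(p) = 0. Then, setting w = (v(p₁),…,v(pₙ)) ∈ ℝⁿ, the minimum min_{a ∈ supp(f)} (v(c_a) + ⟨a, w⟩) is attained by at least two distinct exponents a ∈ supp(f), where c_a denotes the coefficient of x^a in f; i.e., w lies in the corner locus T(trop(f)). -/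
/-!
Write `T_a = c_a p^a` for the terms of `f(p)`. Since `v` is an additive valuation,
`v(T_a) = v(c_a) + ⟨a, w⟩`, and this is finite because `p` lies in the torus. The terms sum to
`f(p) = 0`; if one of them had valuation strictly below all others, the ultrametric inequality
would force `v(f(p)) = v(T_a) < ∞`, contradicting `v(0) = ∞`.
-/

open MvPolynomial

namespace AddValuation

variable {R Γ₀ : Type*} [LinearOrderedAddCommMonoidWithTop Γ₀]

def ofMapEqTopIff [Ring R] [Nontrivial R] (v : R → Γ₀) (hv_mul : ∀ a b, v (a * b) = v a + v b)
    (hv_add : ∀ a b, min (v a) (v b) ≤ v (a + b)) (hv_top : ∀ a, v a = ⊤ ↔ a = 0) :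
    AddValuation R Γ₀ :=
  have hv_one : v 1 = 0 := by
    have h1 : v 1 ≠ ⊤ := (hv_top 1).not.2 one_ne_zero
    rw [← add_right_inj_of_ne_top h1, ← hv_mul, one_mul, add_zero]
  AddValuation.of v ((hv_top 0).2 rfl) hv_one hv_add hv_mul

theorem map_prod [CommRing R] (v : AddValuation R Γ₀) {ι : Type*} (s : Finset ι) (g : ι → R) :
    v (∏ i ∈ s, g i) = ∑ i ∈ s, v (g i) := by
  classical
  induction s using Finset.induction with
  | empty => simp
  | insert j s hj ih => rw [Finset.prod_insert hj, Finset.sum_insert hj, map_mul, ih]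

theorem exists_ne_map_eq_of_sum_eq_zero [Ring R] (v : AddValuation R Γ₀) {ι : Type*}
    {s : Finset ι} {g : ι → R} (hsum : ∑ i ∈ s, g i = 0) {j : ι} (hj : j ∈ s)
    (hmin : ∀ i ∈ s, v (g j) ≤ v (g i)) (htop : v (g j) ≠ ⊤) :
    ∃ i ∈ s, i ≠ j ∧ v (g i) = v (g j) := by
  classical
  by_contra! hne
  have hlt : ∀ i ∈ s.erase j, v (g j) < v (g i) := fun i hi =>
    (hmin i (Finset.mem_of_mem_erase hi)).lt_of_ne'
      (hne i (Finset.mem_of_mem_erase hi) (Finset.ne_of_mem_erase hi))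
  have hval : v (∑ i ∈ s, g i) = v (g j) := by
    rw [← Finset.add_sum_erase s g hj]
    exact v.map_add_eq_of_lt_left (v.map_lt_sum htop hlt)
  rw [hsum, map_zero] at hval
  exact htop hval.symm

end AddValuation

noncomputable def tropTerm {K : Type*} [Field K] {n : ℕ} (v : K → WithTop ℝ)
    (f : MvPolynomial (Fin n) K) (w : Fin n → ℝ) (a : Fin n →₀ ℕ) : WithTop ℝ :=
  v (coeff a f) + ((∑ i, (a i : ℝ) * w i : ℝ) : WithTop ℝ)

theorem AddValuation.map_coeff_mul_prod_pow {K : Type*} [Field K] {n : ℕ}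
    (v : AddValuation K (WithTop ℝ)) (f : MvPolynomial (Fin n) K) {p : Fin n → K}
    {w : Fin n → ℝ} (hw : ∀ i, (w i : WithTop ℝ) = v (p i)) (a : Fin n →₀ ℕ) :
    v (coeff a f * ∏ i, p i ^ a i) = tropTerm v f w a := by
  simp only [tropTerm, map_mul, map_prod, map_pow, ← hw, WithTop.coe_sum, WithTop.coe_mul,
    ← WithTop.coe_nsmul, nsmul_eq_mul]

/-- If `f(p) = 0` for a point `p` of the torus, then the valuation vector of `p`
lies in the corner locus of the tropicalization of `f`: the minimum of
`v(c_a) + ⟨a, w⟩` over the support of `f` is attained at least twice. -/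
theorem amoeba_subset_corner_locus {K : Type*} [Field K] {n : ℕ}
    (v : K → WithTop ℝ)
    (hv_mul : ∀ a b : K, v (a * b) = v a + v b)
    (hv_add : ∀ a b : K, min (v a) (v b) ≤ v (a + b))
    (hv_top : ∀ a : K, v a = ⊤ ↔ a = 0)
    (f : MvPolynomial (Fin n) K) (hf : f ≠ 0)
    (p : Fin n → K) (hp : ∀ i, p i ≠ 0) (hfp : eval p f = 0)
    (w : Fin n → ℝ) (hw : ∀ i, (w i : WithTop ℝ) = v (p i)) :
    ∃ a ∈ f.support, ∃ b ∈ f.support, a ≠ b ∧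
      tropTerm v f w a = tropTerm v f w b ∧
      ∀ e ∈ f.support, tropTerm v f w a ≤ tropTerm v f w e := by
  let V := AddValuation.ofMapEqTopIff v hv_mul hv_add hv_top
  have hterm : ∀ a, V (coeff a f * ∏ i, p i ^ a i) = tropTerm v f w a :=
    V.map_coeff_mul_prod_pow f hw
  obtain ⟨a, ha, hmin⟩ := f.support.exists_min_image (tropTerm v f w) (support_nonempty.2 hf)
  have htop : V (coeff a f * ∏ i, p i ^ a i) ≠ ⊤ :=
    V.ne_top_iff.2 <| mul_ne_zero (mem_support_iff.1 ha) <|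
      Finset.prod_ne_zero_iff.2 fun i _ => pow_ne_zero _ (hp i)
  obtain ⟨b, hb, hba, hab⟩ := V.exists_ne_map_eq_of_sum_eq_zero (by rwa [← eval_eq']) ha
    (by simpa only [hterm] using hmin) htop
  rw [hterm, hterm] at hab
  exact ⟨a, ha, b, hb, hba.symm, hab.symm, hmin⟩
end

section
/- Let S = ℂ[x₁,…,x_N], let J₁,…,J_c be pairwise disjoint nonempty subsets of {1,…,N}, let m_j = ∏_{i ∈ J_j} x_i and I₀ = ⟨m₁,…,m_c⟩ ⊆ S. Let g₁,…,g_c ∈ S be polynomials none of whose monomials lies in I₀, and assume that for every a ∈ ℂ the polynomials m₁ + a·g₁, …, m_c + a·g_c form a regular sequence in S. Then the quotient ring ℂ[t][x₁,…,x_N]/⟨m_j + t·g_j : j = 1,…,c⟩ is flat as a ℂ[t]-module, and the ideal ⟨m_j + t·g_j : j = 1,…,c⟩ + ⟨t⟩ equals I₀·ℂ[t][x₁,…,x_N] + ⟨t⟩; in particular the fiber of the family at t = 0 is S/I₀. -/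
/-!
Since `ℂ[t]` is a principal ideal domain, flatness means that no nonzero polynomial in `t` is a
zero divisor on `ℂ[t][x] ⧸ ⟨m_j + t g_j⟩`, and as `ℂ` is algebraically closed it suffices to
check this for the linear factors `t - a`. Modulo `t - a` the generators become `m_j + a g_j`,
a regular sequence by hypothesis; peeling off the generators one at a time, regularity of a
sequence modulo a nonzero divisor `u` lifts to the statement that `u` is a nonzero divisor on the
quotient by the sequence. The special fiber is immediate: modulo `t` each `m_j + t g_j` is `m_j`.
-/

open MvPolynomial

namespace RingTheory.Sequence

variable {R S : Type*} [CommRing R] [CommRing S]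

lemma IsWeaklyRegular.mem_ofList_of_mul_mem {l : List S} {f q : S}
    (h : IsWeaklyRegular S (l ++ [f])) (hq : f * q ∈ Ideal.ofList l) :
    q ∈ Ideal.ofList l := by
  have hf := (isWeaklyRegular_singleton_iff _ f).mp ((isWeaklyRegular_append_iff S l [f]).mp h).2
  rw [Ideal.smul_top_eq_map, Algebra.algebraMap_self, Ideal.map_id,
    Submodule.restrictScalars_self] at hf
  exact mem_of_isSMulRegular_quotient_of_smul_mem hf hq

theorem isSMulRegular_quotient_ofList_of_isWeaklyRegular_map (τ : R →+* S)
    (hτ : Function.Surjective τ) {u : R} (hker : RingHom.ker τ = Ideal.span {u})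
    (hu : IsSMulRegular R u) {l : List R} (hl : IsWeaklyRegular S (l.map τ)) :
    IsSMulRegular (R ⧸ Ideal.ofList l) u := by
  rw [isSMulRegular_quotient_iff_mem_of_smul_mem]
  induction l using List.reverseRecOn with
  | nil =>
    intro P hP
    rw [Ideal.ofList_nil, Submodule.mem_bot] at hP ⊢
    exact hu (hP.trans (smul_zero u).symm)
  | append_singleton l f ih =>
    rw [List.map_append, List.map_singleton] at hl
    have hf_reg : ∀ Q, f * Q ∈ Ideal.span {u} ⊔ Ideal.ofList l →
        Q ∈ Ideal.span {u} ⊔ Ideal.ofList l := by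
      have hcomap : Ideal.span {u} ⊔ Ideal.ofList l =
          Ideal.comap τ (Ideal.ofList (l.map τ)) := by
        rw [← Ideal.map_ofList, Ideal.comap_map_of_surjective' τ hτ, hker, sup_comm]
      intro Q hQ
      rw [hcomap, Ideal.mem_comap] at hQ ⊢
      exact hl.mem_ofList_of_mul_mem (map_mul τ f Q ▸ hQ)
    intro P hP
    rw [smul_eq_mul, Ideal.ofList_append, Ideal.ofList_singleton, sup_comm,
      Ideal.mem_span_singleton_sup] at hP
    rw [Ideal.ofList_append, Ideal.ofList_singleton, sup_comm, Ideal.mem_span_singleton_sup]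
    obtain ⟨h, s, hs, hPeq⟩ := hP
    -- `u P = h f + s` forces `h ∈ ⟨u⟩ + ⟨l⟩`, say `h = q u + s'`; then `u (P - q f) ∈ ⟨l⟩`.
    obtain ⟨q, s', hs', hh⟩ := Ideal.mem_span_singleton_sup.mp <|
      hf_reg h (Ideal.mem_span_singleton_sup.mpr ⟨P, -s, neg_mem hs, by linear_combination -hPeq⟩)
    refine ⟨q, P - q * f, ih ((isWeaklyRegular_append_iff S _ _).mp hl).1 _ ?_, by ring⟩
    have : u • (P - q * f) = s + s' * f := by linear_combination -hPeq - f * hh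
    exact this ▸ add_mem hs (Ideal.mul_mem_right f _ hs')

end RingTheory.Sequence

theorem Ideal.ofList_ofFn {R : Type*} [Semiring R] {n : ℕ} (f : Fin n → R) :
    Ideal.ofList (List.ofFn f) = Ideal.span (Set.range f) := by
  simp only [Ideal.ofList, List.mem_ofFn', Set.ofPred_mem_eq]

theorem Ideal.span_range_add_mul_sup_span_singleton {R ι : Type*} [CommRing R]
    (f g : ι → R) (t : R) :
    Ideal.span (Set.range fun j => f j + t * g j) ⊔ Ideal.span {t} =
      Ideal.span (Set.range f) ⊔ Ideal.span {t} := by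
  have hle : ∀ f g : ι → R, Ideal.span (Set.range fun j => f j + t * g j) ≤
      Ideal.span (Set.range f) ⊔ Ideal.span {t} := by
    intro f g
    rw [Ideal.span_le]
    rintro _ ⟨j, rfl⟩
    exact add_mem (mem_sup_left (subset_span ⟨j, rfl⟩))
      (mem_sup_right (mul_mem_right _ _ (mem_span_singleton_self t)))
  refine le_antisymm (sup_le (hle f g) le_sup_right) (sup_le ?_ le_sup_right)
  simpa using hle (fun j => f j + t * g j) (fun j => -g j)

theorem Polynomial.isTorsionFree_of_isSMulRegular_X_sub_C {K M : Type*} [Field K]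
    [IsAlgClosed K] [AddCommGroup M] [Module (Polynomial K) M]
    (h : ∀ a : K, IsSMulRegular M (Polynomial.X - Polynomial.C a)) :
    Module.IsTorsionFree (Polynomial K) M := by
  refine ⟨fun p hp => ?_⟩
  rw [← Polynomial.C_leadingCoeff_mul_prod_multiset_X_sub_C
    (IsAlgClosed.card_roots_eq_natDegree (p := p))]
  exact (Polynomial.isUnit_C.mpr (Polynomial.leadingCoeff_ne_zero.mpr hp.ne_zero).isUnit)
    |>.isSMulRegular M
    |>.mul (Multiset.prod_induction _ _ (fun _ _ => .mul) (.one M)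
      (by simp only [Multiset.mem_map]; rintro _ ⟨a, -, rfl⟩; exact h a))

namespace MvPolynomial

variable {σ K : Type*} [CommRing K]

theorem ker_map_evalRingHom (a : K) :
    RingHom.ker (map (σ := σ) (Polynomial.evalRingHom a)) =
      Ideal.span {C (Polynomial.X - Polynomial.C a)} := by
  rw [ker_map, Polynomial.ker_evalRingHom, Ideal.map_span, Set.image_singleton]

noncomputable def linearFamilyIdeal {ι : Type*} (f g : ι → MvPolynomial σ K) :
    Ideal (MvPolynomial σ (Polynomial K)) :=
  Ideal.span (Set.range fun j => map Polynomial.C (f j) + C Polynomial.X * map Polynomial.C (g j))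

theorem isSMulRegular_X_sub_C_quotient_linearFamilyIdeal [IsDomain K] {c : ℕ}
    (f g : Fin c → MvPolynomial σ K) (a : K)
    (hreg : RingTheory.Sequence.IsWeaklyRegular (MvPolynomial σ K)
      (List.ofFn fun j => f j + a • g j)) :
    IsSMulRegular (MvPolynomial σ (Polynomial K) ⧸ linearFamilyIdeal f g)
      (Polynomial.X - Polynomial.C a) := by
  have hC : (Polynomial.evalRingHom a).comp Polynomial.C = RingHom.id K :=
    RingHom.ext fun _ => Polynomial.eval_C
  have hspecialize : (List.ofFn fun j => map Polynomial.C (f j) +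
      C Polynomial.X * map Polynomial.C (g j)).map (map (Polynomial.evalRingHom a)) =
        List.ofFn fun j => f j + a • g j := by
    simp [List.map_ofFn, Function.comp_def, map_map, smul_eq_C_mul, hC, map_id]
  have hu : IsSMulRegular (MvPolynomial σ (Polynomial K)) (C (Polynomial.X - Polynomial.C a)) :=
    (IsRegular.of_ne_zero (C_ne_zero.mpr (Polynomial.X_sub_C_ne_zero a))).left.isSMulRegular
  rw [← hspecialize] at hreg
  have hquot := RingTheory.Sequence.isSMulRegular_quotient_ofList_of_isWeaklyRegular_map _
    (map_surjective _ fun x => ⟨Polynomial.C x, Polynomial.eval_C⟩) (ker_map_evalRingHom a)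
    hu hreg
  rw [Ideal.ofList_ofFn] at hquot
  exact hquot.of_map (f := C) (algebraMap_smul (MvPolynomial σ (Polynomial K)) _)

end MvPolynomial

theorem canonical_degeneration_flat_with_monomial_special_fiber_general {N c : ℕ}
    (m : Fin c → MvPolynomial (Fin N) ℂ)
    (I₀ : Ideal (MvPolynomial (Fin N) ℂ))
    (hI₀ : I₀ = Ideal.span (Set.range m))
    (g : Fin c → MvPolynomial (Fin N) ℂ)
    (hreg : ∀ a : ℂ, RingTheory.Sequence.IsRegular (MvPolynomial (Fin N) ℂ)
      (List.ofFn fun j => m j + a • g j))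
    (I : Ideal (MvPolynomial (Fin N) (Polynomial ℂ)))
    (hI : I = Ideal.span (Set.range fun j =>
      map Polynomial.C (m j) + C Polynomial.X * map Polynomial.C (g j))) :
    Module.Flat (Polynomial ℂ) (MvPolynomial (Fin N) (Polynomial ℂ) ⧸ I) ∧
      I ⊔ Ideal.span {C Polynomial.X} =
        Ideal.map (map Polynomial.C) I₀ ⊔ Ideal.span {C Polynomial.X} := by
  replace hI : I = linearFamilyIdeal m g := hI
  subst hI hI₀
  constructor
  · have : Module.IsTorsionFree (Polynomial ℂ) (MvPolynomial (Fin N) (Polynomial ℂ) ⧸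
        linearFamilyIdeal m g) :=
      Polynomial.isTorsionFree_of_isSMulRegular_X_sub_C fun a =>
        isSMulRegular_X_sub_C_quotient_linearFamilyIdeal m g a (hreg a).toIsWeaklyRegular
    infer_instance
  · rw [linearFamilyIdeal, Ideal.map_span, ← Set.range_comp]
    exact Ideal.span_range_add_mul_sup_span_singleton _ _ _

/-- The canonical monomial degeneration of a complete intersection:
given pairwise disjoint nonempty sets `J j` with associated squarefree monomials
`m j = ∏_{i ∈ J j} x i`, the monomial ideal `I₀ = ⟨m₁, …, m_c⟩`, and polynomials
`g j` none of whose monomials lies in `I₀` such that `m j + a • g j` is a regular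
sequence for every `a : ℂ`, the family defined by the ideal
`I = ⟨m j + t · g j⟩ ⊆ ℂ[t][x₁,…,x_N]` is flat over `ℂ[t]` and its fiber at
`t = 0` is defined by `I₀`. -/
theorem canonical_degeneration_flat_with_monomial_special_fiber {N c : ℕ}
    (J : Fin c → Finset (Fin N)) (hJne : ∀ j, (J j).Nonempty)
    (hJdisj : ∀ j k, j ≠ k → Disjoint (J j) (J k))
    (m : Fin c → MvPolynomial (Fin N) ℂ)
    (hm : ∀ j, m j = ∏ i ∈ J j, X i)
    (I₀ : Ideal (MvPolynomial (Fin N) ℂ))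
    (hI₀ : I₀ = Ideal.span (Set.range m))
    (g : Fin c → MvPolynomial (Fin N) ℂ)
    (hg : ∀ j, ∀ a ∈ (g j).support, (monomial a (1 : ℂ)) ∉ I₀)
    (hreg : ∀ a : ℂ, RingTheory.Sequence.IsRegular (MvPolynomial (Fin N) ℂ)
      (List.ofFn fun j => m j + a • g j))
    (I : Ideal (MvPolynomial (Fin N) (Polynomial ℂ)))
    (hI : I = Ideal.span (Set.range fun j =>
      map Polynomial.C (m j) + C Polynomial.X * map Polynomial.C (g j))) :
    Module.Flat (Polynomial ℂ) (MvPolynomial (Fin N) (Polynomial ℂ) ⧸ I) ∧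
      I ⊔ Ideal.span {C Polynomial.X} =
        Ideal.map (map Polynomial.C) I₀ ⊔ Ideal.span {C Polynomial.X} :=
  canonical_degeneration_flat_with_monomial_special_fiber_general m I₀ hI₀ g hreg I hI
end

section
/- Let S = ℂ[x₁,…,x_N], let J₁,…,J_c be pairwise disjoint nonempty subsets of {1,…,N}, let m_j = x^{b_j} with b_j ∈ ℕ^N the indicator vector of J_j, I₀ = ⟨m₁,…,m_c⟩, and let g₁,…,g_c ∈ S be nonzero polynomials none of whose monomials lies in I₀. Set f_j = m_j + t·g_j ∈ ℂ[t, x₁,…,x_N] and I = ⟨f₁,…,f_c⟩. For (w_t, w) ∈ ℝ × ℝ^N assign to a term c·t^k·x^a the weight k·w_t + ⟨a, w⟩, let in_{(w_t,w)}(h) be the sum of the terms of h of minimal weight, and let in_{(w_t,w)}(I) be the ideal generated by in_{(w_t,w)}(h) for all nonzero h ∈ I. Then: (i) if w_t + ⟨a, w⟩ > ⟨b_j, w⟩ for every j and every a ∈ supp(g_j), then in_{(w_t,w)}(I) = ⟨m₁,…,m_c⟩ (as an ideal of ℂ[t, x₁,…,x_N]); (ii) conversely, if in_{(w_t,w)}(I)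 = ⟨m₁,…,m_c⟩, then w_t + ⟨a, w⟩ ≥ ⟨b_j, w⟩ for every j and every a ∈ supp(g_j). -/
open MvPolynomial
open scoped Classical

noncomputable section

/-- The weight `k·w_t + ⟨a, w⟩` of an exponent vector `e = (k, a)` in
`ℂ[t, x₁, …, x_N]`, where `t` corresponds to the variable `Sum.inl ()`. -/
def wtExp {N : ℕ} (wt : ℝ) (w : Fin N → ℝ) (e : (Unit ⊕ Fin N) →₀ ℕ) : ℝ :=
  wt * (e (Sum.inl ()) : ℝ) + ∑ i, (e (Sum.inr i) : ℝ) * w i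

/-- The initial form `in_{(w_t,w)}(h)`: the sum of the terms of `h` of minimal
weight. -/
def initialForm {N : ℕ} (wt : ℝ) (w : Fin N → ℝ)
    (h : MvPolynomial (Unit ⊕ Fin N) ℂ) : MvPolynomial (Unit ⊕ Fin N) ℂ :=
  ∑ e ∈ h.support.filter (fun e => ∀ e' ∈ h.support, wtExp wt w e ≤ wtExp wt w e'),
    monomial e (coeff e h)

/-- The initial ideal `in_{(w_t,w)}(I)`, generated by the initial forms of all
nonzero elements of `I`. -/
def initialIdeal {N : ℕ} (wt : ℝ) (w : Fin N → ℝ)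
    (I : Ideal (MvPolynomial (Unit ⊕ Fin N) ℂ)) :
    Ideal (MvPolynomial (Unit ⊕ Fin N) ℂ) :=
  Ideal.span {q | ∃ h ∈ I, h ≠ 0 ∧ q = initialForm wt w h}


/-!
Write `h ∈ I` as `∑ q_j f_j` with `f_j = x^{B_j} + r_j`, where every term of `r_j` is heavier
than `x^{B_j}` by at least some `δ > 0`, and call `w(d) + w(B_j)` the level of a term `x^d` of
`q_j`. If the least level `μ` is below the order of `h`, the level-`μ` parts `p_j` of the `q_j`
satisfy `∑ p_j x^{B_j} = 0`. The `x^{B_j}` are pairwise coprime monomials, so this syzygy is a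
combination of Koszul syzygies `x^{B_k} e_j - x^{B_j} e_k`; subtracting the same combination of
the Koszul syzygies `f_k e_j - f_j e_k` of the `f_j` removes the level `μ` and creates only terms
of level at least `μ + δ`. So the levels can be cleared one `δ`-band at a time, each band
holding finitely many, and once every level is at least the order of `h`, the initial form of
`h` is `∑ in(q_j) x^{B_j} ∈ ⟨x^{B_j}⟩`.

Conversely, if a term `t x^a` of `f_j` were lighter than `x^{b_j}`, the initial form of `f_j`
would consist of terms `t x^{a'}` with `a' ∈ supp g_j`, and such a term lies in `⟨x^{b_k}⟩` only
if `x^{a'} ∈ I₀`.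
-/

section Koszul

variable {A ι : Type*} [CommRing A] [Fintype ι]

def koszul (m : ι → A) (H : ι → ι → A) (j : ι) : A :=
  ∑ k, (H j k - H k j) * m k

theorem koszul_add (m : ι → A) (H H' : ι → ι → A) :
    koszul m (H + H') = koszul m H + koszul m H' := by
  ext j
  simp only [koszul, Pi.add_apply, ← Finset.sum_add_distrib]
  exact Finset.sum_congr rfl fun k _ => by ring

theorem koszul_add_left (m m' : ι → A) (H : ι → ι → A) :
    koszul (m + m') H = koszul m H + koszul m' H := by
  ext j
  simp only [koszul, Pi.add_apply, mul_add, Finset.sum_add_distrib]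

theorem sum_koszul_mul_self (m : ι → A) (H : ι → ι → A) : ∑ j, koszul m H j * m j = 0 := by
  simp only [koszul, Finset.sum_mul, sub_mul, Finset.sum_sub_distrib]
  rw [sub_eq_zero, Finset.sum_comm]
  exact Fintype.sum_congr _ _ fun j => Fintype.sum_congr _ _ fun k => by ring

theorem exists_koszul_of_sum_mul_eq_zero (m : ι → A)
    (hm : ∀ (s : Finset ι) (j : ι), j ∉ s → ∀ a : A,
      a * m j ∈ Ideal.span (m '' s) → a ∈ Ideal.span (m '' s))
    {p : ι → A} (hp : ∑ j, p j * m j = 0) : ∃ H, p = koszul m H := by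
  suffices ∀ s : Finset ι, ∀ p : ι → A, (∀ j ∉ s, p j = 0) → ∑ j, p j * m j = 0 →
      ∃ H, p = koszul m H from this Finset.univ p (by simp) hp
  -- Induction on the support of `p`: regularity puts the new coefficient `p j₀` into
  -- `⟨m k : k ∈ s⟩`, and subtracting the matching Koszul syzygy kills it.
  intro s
  induction s using Finset.induction_on with
  | empty =>
    exact fun p hp _ => ⟨0, funext fun j => by simp [koszul, hp j (Finset.notMem_empty j)]⟩
  | insert j₀ s hj₀ ih =>
    intro p hps hp
    have hsum : p j₀ * m j₀ + ∑ k ∈ s, p k * m k = 0 := by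
      rw [← Finset.sum_insert (f := fun k => p k * m k) hj₀, ← hp]
      exact Finset.sum_subset (Finset.subset_univ _) fun k _ hk => by rw [hps k hk, zero_mul]
    have hmem : p j₀ * m j₀ ∈ Ideal.span (m '' s) := by
      rw [eq_neg_of_add_eq_zero_left hsum, Ideal.neg_mem_iff]
      exact Ideal.sum_mem _ fun k hk => Ideal.mul_mem_left _ _ (Ideal.subset_span ⟨k, hk, rfl⟩)
    obtain ⟨c, hc⟩ := (Submodule.mem_span_image_finset_iff_exists_fun' A).1 (hm s j₀ hj₀ _ hmem)
    set H₀ : ι → ι → A := fun j k => if j = j₀ ∧ k ∈ s then c k else 0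
    have hzero : ∀ j ∉ s, (p - koszul m H₀) j = 0 := by
      intro j hj
      by_cases hj' : j = j₀
      · subst hj'
        simp [koszul, H₀, hj, ← hc]
      · simp [koszul, H₀, hj, hj', hps j (by simp [hj, hj'])]
    have hsyz : ∑ j, (p - koszul m H₀) j * m j = 0 := by
      simp only [Pi.sub_apply, sub_mul, Finset.sum_sub_distrib, hp, sum_koszul_mul_self, sub_zero]
    obtain ⟨H, hH⟩ := ih _ hzero hsyz
    exact ⟨H₀ + H, by rw [koszul_add, ← hH, add_sub_cancel]⟩

end Koszul

section Descent

variable {α : Type*} (P : α → Prop) (Λ : α → Finset ℝ) {θ δ : ℝ}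

theorem exists_forall_le_of_descent_of_band (hδ : 0 < δ)
    (step : ∀ a, P a → ∀ μ ∈ Λ a, μ < θ → (∀ ν ∈ Λ a, μ ≤ ν) →
      ∃ a', P a' ∧ ∀ ν ∈ Λ a', (ν ∈ Λ a ∧ μ < ν) ∨ μ + δ ≤ ν)
    {n : ℕ} (ih : ∀ a, P a → (∀ ν ∈ Λ a, θ - n * δ ≤ ν) → ∃ a', P a' ∧ ∀ ν ∈ Λ a', θ ≤ ν)
    {a : α} (ha : P a) (hband : ∀ ν ∈ Λ a, θ - (n + 1) * δ ≤ ν) :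
    ∃ a', P a' ∧ ∀ ν ∈ Λ a', θ ≤ ν := by
  -- Within the band `[θ - (n + 1) δ, θ - n δ)` the number of levels drops at every step.
  induction hk : ((Λ a).filter (· < θ - n * δ)).card using Nat.strong_induction_on
    generalizing a with
  | _ k ihk =>
    by_cases hlow : ((Λ a).filter (· < θ - n * δ)).Nonempty
    · obtain ⟨ν₀, hν₀⟩ := hlow
      have hne : (Λ a).Nonempty := ⟨ν₀, (Finset.mem_filter.1 hν₀).1⟩
      set μ := (Λ a).min' hne
      have hμ : μ < θ - n * δ :=
        ((Λ a).min'_le _ (Finset.mem_filter.1 hν₀).1).trans_lt (Finset.mem_filter.1 hν₀).2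
      obtain ⟨a', ha', hstep⟩ := step a ha μ ((Λ a).min'_mem hne)
        (hμ.trans_le (by simp [mul_nonneg n.cast_nonneg hδ.le]))
        fun ν hν => (Λ a).min'_le ν hν
      have hsub : (Λ a').filter (· < θ - n * δ) ⊆ ((Λ a).filter (· < θ - n * δ)).erase μ := by
        intro ν hν
        obtain ⟨hν, hνlt⟩ := Finset.mem_filter.1 hν
        rcases hstep ν hν with ⟨hνa, hμν⟩ | hμν
        · exact Finset.mem_erase.2 ⟨hμν.ne', Finset.mem_filter.2 ⟨hνa, hνlt⟩⟩
        · have := hband μ ((Λ a).min'_mem hne)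
          linarith
      refine ihk _ ?_ ha' ?_ rfl
      · rw [← hk]
        exact (Finset.card_le_card hsub).trans_lt (Finset.card_erase_lt_of_mem
          (Finset.mem_filter.2 ⟨(Λ a).min'_mem hne, hμ⟩))
      · intro ν hν
        rcases hstep ν hν with ⟨hνa, -⟩ | hμν
        · exact hband ν hνa
        · have := hband μ ((Λ a).min'_mem hne)
          linarith
    · exact ih a ha fun ν hν => not_lt.1 fun h => hlow ⟨ν, Finset.mem_filter.2 ⟨hν, h⟩⟩

theorem exists_forall_le_of_descent (hδ : 0 < δ)
    (step : ∀ a, P a → ∀ μ ∈ Λ a, μ < θ → (∀ ν ∈ Λ a, μ ≤ ν) →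
      ∃ a', P a' ∧ ∀ ν ∈ Λ a', (ν ∈ Λ a ∧ μ < ν) ∨ μ + δ ≤ ν)
    {a : α} (ha : P a) : ∃ a', P a' ∧ ∀ ν ∈ Λ a', θ ≤ ν := by
  have key : ∀ n : ℕ, ∀ a, P a → (∀ ν ∈ Λ a, θ - n * δ ≤ ν) →
      ∃ a', P a' ∧ ∀ ν ∈ Λ a', θ ≤ ν := by
    intro n
    induction n with
    | zero => exact fun a ha hband => ⟨a, ha, by simpa using hband⟩
    | succ n ih =>
      exact fun a ha hband => exists_forall_le_of_descent_of_band P Λ hδ step ih ha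
        (by exact_mod_cast hband)
  obtain ⟨L, hL⟩ := (Λ a).bddBelow
  refine key ⌈(θ - L) / δ⌉₊ a ha fun ν hν => ?_
  have := (div_le_iff₀ hδ).1 (Nat.le_ceil ((θ - L) / δ))
  linarith [hL hν]

end Descent

theorem Finsupp.le_of_le_add_of_disjoint {σ : Type*} {a b c : σ →₀ ℕ} (hac : Disjoint a c)
    (h : a ≤ b + c) : a ≤ b := by
  intro i
  have hi := h i
  rcases eq_or_ne (a i) 0 with ha | ha
  · simp [ha]
  · have hc : c i = 0 := Finsupp.notMem_support_iff.1 <|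
      Finset.disjoint_left.1 (Finsupp.disjoint_iff.1 hac) (Finsupp.mem_support_iff.2 ha)
    simpa [hc] using hi

theorem Finsupp.weight_sumElim_mapDomain_inr {α β M : Type*} [AddCommMonoid M] (u : α → M)
    (v : β → M) (a : β →₀ ℕ) :
    Finsupp.weight (Sum.elim u v) (a.mapDomain Sum.inr) = Finsupp.weight v a := by
  change Finsupp.linearCombination ℕ _ _ = Finsupp.linearCombination ℕ _ _
  rw [Finsupp.linearCombination_mapDomain, Sum.elim_comp_inr]

namespace MvPolynomial

theorem mem_span_range_monomial_iff {σ R ι : Type*} [CommSemiring R] {B : ι → σ →₀ ℕ}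
    {x : MvPolynomial σ R} :
    x ∈ Ideal.span (Set.range fun k => monomial (B k) (1 : R)) ↔
      ∀ d ∈ x.support, ∃ k, B k ≤ d := by
  rw [Set.range_comp' (fun d => monomial d (1 : R)), mem_ideal_span_monomial_image]
  simp

theorem mem_span_monomial_of_mul_mem {σ R ι : Type*} [CommSemiring R]
    {B : ι → σ →₀ ℕ} (hB : Pairwise fun j k => Disjoint (B j) (B k)) {s : Finset ι} {j : ι}
    (hj : j ∉ s) {a : MvPolynomial σ R}
    (ha : a * monomial (B j) 1 ∈ Ideal.span ((fun k => monomial (B k) (1 : R)) '' s)) :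
    a ∈ Ideal.span ((fun k => monomial (B k) (1 : R)) '' s) := by
  rw [← Set.image_image (fun d => monomial d (1 : R)) B, mem_ideal_span_monomial_image] at ha ⊢
  intro d hd
  obtain ⟨_, ⟨k, hk, rfl⟩, hle⟩ := ha (d + B j) (by
    rw [mem_support_iff, coeff_mul_monomial, mul_one]; exact mem_support_iff.1 hd)
  exact ⟨B k, ⟨k, hk, rfl⟩,
    Finsupp.le_of_le_add_of_disjoint (hB (ne_of_mem_of_not_mem hk hj)) hle⟩

theorem mem_support_X_mul_rename_inr {α β R : Type*} [CommSemiring R] (u : α)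
    {g : MvPolynomial β R} {d : (α ⊕ β) →₀ ℕ} :
    d ∈ (X (Sum.inl u) * rename Sum.inr g).support ↔
      ∃ a ∈ g.support, Finsupp.single (Sum.inl u) 1 + a.mapDomain Sum.inr = d := by
  simp [support_X_mul, support_rename_of_injective Sum.inr_injective]

section WeightFiltration

variable {σ R : Type*} [CommSemiring R] (ω : σ → ℝ)

def weightFiltration (α : ℝ) : Submodule R (MvPolynomial σ R) where
  carrier := {φ | ∀ d ∈ φ.support, α ≤ Finsupp.weight ω d}
  add_mem' {φ ψ} hφ hψ d hd := by
    rcases Finset.mem_union.1 (support_add hd) with h | h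
    exacts [hφ d h, hψ d h]
  zero_mem' := by simp
  smul_mem' r φ hφ d hd := hφ d (support_smul hd)

variable {ω}

theorem mem_weightFiltration {α : ℝ} {φ : MvPolynomial σ R} :
    φ ∈ weightFiltration ω α ↔ ∀ d ∈ φ.support, α ≤ Finsupp.weight ω d :=
  Iff.rfl

theorem mul_mem_weightFiltration {α β : ℝ} {φ ψ : MvPolynomial σ R}
    (hφ : φ ∈ weightFiltration ω α) (hψ : ψ ∈ weightFiltration ω β) :
    φ * ψ ∈ weightFiltration ω (α + β) := by
  intro d hd
  obtain ⟨d₁, hd₁, d₂, hd₂, rfl⟩ := Finset.mem_add.1 (support_mul φ ψ hd)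
  rw [map_add]
  exact add_le_add (hφ d₁ hd₁) (hψ d₂ hd₂)

theorem IsWeightedHomogeneous.mem_weightFiltration {φ : MvPolynomial σ R} {n : ℝ}
    (hφ : IsWeightedHomogeneous ω φ n) : φ ∈ weightFiltration ω n :=
  fun _ hd => (hφ (mem_support_iff.1 hd)).ge

theorem weightedHomogeneousComponent_eq_zero_of_mem_weightFiltration {α n : ℝ}
    {φ : MvPolynomial σ R} (hφ : φ ∈ weightFiltration ω α) (hn : n < α) :
    weightedHomogeneousComponent ω n φ = 0 :=
  weightedHomogeneousComponent_eq_zero' n φ fun d hd => (hn.trans_le (hφ d hd)).ne'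

theorem weightedHomogeneousComponent_mul_monomial (n : ℝ) (φ : MvPolynomial σ R)
    (d : σ →₀ ℕ) (r : R) :
    weightedHomogeneousComponent ω n (φ * monomial d r) =
      weightedHomogeneousComponent ω (n - Finsupp.weight ω d) φ * monomial d r := by
  ext e
  rw [coeff_weightedHomogeneousComponent, coeff_mul_monomial', coeff_mul_monomial',
    coeff_weightedHomogeneousComponent]
  by_cases hde : d ≤ e
  · have hw : Finsupp.weight ω (e - d) = Finsupp.weight ω e - Finsupp.weight ω d := by
      rw [eq_sub_iff_add_eq, ← map_add, tsub_add_cancel_of_le hde]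
    simp only [hde, if_true, hw, sub_left_inj]
    split_ifs <;> simp
  · simp [hde]

end WeightFiltration

section StandardBasis

variable {σ R ι : Type*} [CommRing R] [Fintype ι] (ω : σ → ℝ) (B : ι → σ →₀ ℕ)

def levels (q : ι → MvPolynomial σ R) : Finset ℝ :=
  Finset.univ.biUnion fun j =>
    (q j).support.image fun d => Finsupp.weight ω d + Finsupp.weight ω (B j)

variable {ω B}

theorem mem_support_sub_weightedHomogeneousComponent {n : ℝ} {φ : MvPolynomial σ R}
    {d : σ →₀ ℕ} :
    d ∈ (φ - weightedHomogeneousComponent ω n φ).support ↔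
      d ∈ φ.support ∧ Finsupp.weight ω d ≠ n := by
  rw [mem_support_iff, coeff_sub, coeff_weightedHomogeneousComponent, mem_support_iff]
  split_ifs with h <;> simp [h]

theorem mem_levels {q : ι → MvPolynomial σ R} {ν : ℝ} :
    ν ∈ levels ω B q ↔
      ∃ j, ∃ d ∈ (q j).support, Finsupp.weight ω d + Finsupp.weight ω (B j) = ν := by
  simp [levels]

theorem forall_levels_le_iff {q : ι → MvPolynomial σ R} {α : ℝ} :
    (∀ ν ∈ levels ω B q, α ≤ ν) ↔
      ∀ j, q j ∈ weightFiltration ω (α - Finsupp.weight ω (B j)) := by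
  simp only [mem_levels, mem_weightFiltration, sub_le_iff_le_add]
  exact ⟨fun h j d hd => h _ ⟨j, d, hd, rfl⟩, fun h _ ⟨j, d, hd, hν⟩ => hν ▸ h j d hd⟩

theorem exists_pos_forall_mem_weightFiltration {r : ι → MvPolynomial σ R}
    (hr : ∀ j, ∀ d ∈ (r j).support, Finsupp.weight ω (B j) < Finsupp.weight ω d) :
    ∃ δ > 0, ∀ j, r j ∈ weightFiltration ω (Finsupp.weight ω (B j) + δ) := by
  set S : Finset ℝ := insert 1 <| Finset.univ.biUnion fun j =>
    (r j).support.image fun d => Finsupp.weight ω d - Finsupp.weight ω (B j)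
  refine ⟨S.min' (Finset.insert_nonempty _ _), ?_, fun j d hd => ?_⟩
  · refine (Finset.lt_min'_iff _ _).2 fun y hy => ?_
    simp only [S, Finset.mem_insert, Finset.mem_biUnion, Finset.mem_image] at hy
    rcases hy with rfl | ⟨j, -, d, hd, rfl⟩
    · exact one_pos
    · exact sub_pos.2 (hr j d hd)
  · have := S.min'_le _ (Finset.mem_insert_of_mem (Finset.mem_biUnion.2
      ⟨j, Finset.mem_univ _, Finset.mem_image_of_mem _ hd⟩))
    linarith

variable {r : ι → MvPolynomial σ R} {δ : ℝ}

theorem weightedHomogeneousComponent_sum_mul_monomial_add (hδ : 0 < δ)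
    (hr : ∀ j, r j ∈ weightFiltration ω (Finsupp.weight ω (B j) + δ))
    {q : ι → MvPolynomial σ R} {θ : ℝ} (hq : ∀ ν ∈ levels ω B q, θ ≤ ν) :
    weightedHomogeneousComponent ω θ (∑ j, q j * (monomial (B j) 1 + r j)) =
      ∑ j, weightedHomogeneousComponent ω (θ - Finsupp.weight ω (B j)) (q j) *
        monomial (B j) 1 := by
  rw [map_sum]
  refine Finset.sum_congr rfl fun j _ => ?_
  have hqr := mul_mem_weightFiltration (forall_levels_le_iff.1 hq j) (hr j)
  rw [mul_add, map_add, weightedHomogeneousComponent_mul_monomial,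
    weightedHomogeneousComponent_eq_zero_of_mem_weightFiltration hqr (by linarith), add_zero]

theorem exists_isWeightedHomogeneous_koszul (hB : Pairwise fun j k => Disjoint (B j) (B k))
    {p : ι → MvPolynomial σ R} {μ : ℝ} (hp : ∑ j, p j * monomial (B j) 1 = 0)
    (hph : ∀ j, IsWeightedHomogeneous ω (p j) (μ - Finsupp.weight ω (B j))) :
    ∃ H, p = koszul (fun j => monomial (B j) 1) H ∧
      ∀ j k, IsWeightedHomogeneous ω (H j k)
        (μ - Finsupp.weight ω (B j) - Finsupp.weight ω (B k)) := by
  obtain ⟨H, hH⟩ := exists_koszul_of_sum_mul_eq_zero (fun j => monomial (B j) (1 : R))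
    (fun _ _ hj _ ha => mem_span_monomial_of_mul_mem hB hj ha) hp
  refine ⟨fun j k => weightedHomogeneousComponent ω
    (μ - Finsupp.weight ω (B j) - Finsupp.weight ω (B k)) (H j k), ?_,
    fun j k => weightedHomogeneousComponent_isWeightedHomogeneous _ _⟩
  ext1 j
  rw [← (hph j).weightedHomogeneousComponent_same, hH]
  simp only [koszul, map_sum, weightedHomogeneousComponent_mul_monomial, map_sub]
  refine Finset.sum_congr rfl fun k _ => ?_
  rw [sub_right_comm μ (Finsupp.weight ω (B k))]

theorem exists_repr_removing_level (hB : Pairwise fun j k => Disjoint (B j) (B k)) (hδ : 0 < δ)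
    (hr : ∀ j, r j ∈ weightFiltration ω (Finsupp.weight ω (B j) + δ))
    {h : MvPolynomial σ R} {q : ι → MvPolynomial σ R}
    (hq : ∑ j, q j * (monomial (B j) 1 + r j) = h) {μ : ℝ} (hμ : ∀ ν ∈ levels ω B q, μ ≤ ν)
    (hμh : weightedHomogeneousComponent ω μ h = 0) :
    ∃ q', ∑ j, q' j * (monomial (B j) 1 + r j) = h ∧
      ∀ ν ∈ levels ω B q', (ν ∈ levels ω B q ∧ μ < ν) ∨ μ + δ ≤ ν := by
  -- The level-`μ` parts `p j` form a syzygy of the monomials; lift its Koszul expression.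
  set p := fun j => weightedHomogeneousComponent ω (μ - Finsupp.weight ω (B j)) (q j)
  have hsyz : ∑ j, p j * monomial (B j) 1 = 0 := by
    rw [← weightedHomogeneousComponent_sum_mul_monomial_add hδ hr hμ, hq, hμh]
  obtain ⟨H, hpH, hH⟩ := exists_isWeightedHomogeneous_koszul hB hsyz
    fun j => weightedHomogeneousComponent_isWeightedHomogeneous _ _
  have hrH : ∀ j, koszul r H j ∈ weightFiltration ω (μ - Finsupp.weight ω (B j) + δ) := by
    refine fun j => Submodule.sum_mem _ fun k _ => ?_
    have hHk := ((hH j k).sub (sub_right_comm μ (Finsupp.weight ω (B j))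
      (Finsupp.weight ω (B k)) ▸ hH k j)).mem_weightFiltration
    convert mul_mem_weightFiltration hHk (hr k) using 2
    ring
  have hf : (fun j => monomial (B j) (1 : R) + r j) = (fun j => monomial (B j) 1) + r := rfl
  refine ⟨q - koszul (fun j => monomial (B j) 1 + r j) H, ?_, ?_⟩
  · simp only [Pi.sub_apply, sub_mul, Finset.sum_sub_distrib, hq, sum_koszul_mul_self, sub_zero]
  have hq' : ∀ j, (q - koszul (fun j => monomial (B j) 1 + r j) H) j =
      q j - p j - koszul r H j := by
    intro j
    rw [hf, koszul_add_left, ← hpH, Pi.sub_apply, Pi.add_apply, sub_add_eq_sub_sub]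
  intro ν hν
  obtain ⟨j, d, hd, rfl⟩ := mem_levels.1 hν
  rw [hq'] at hd
  rcases Finset.mem_union.1 (support_sub _ _ _ hd) with hd | hd
  · obtain ⟨hdq, hdμ⟩ := mem_support_sub_weightedHomogeneousComponent.1 hd
    have hmem : Finsupp.weight ω d + Finsupp.weight ω (B j) ∈ levels ω B q :=
      mem_levels.2 ⟨j, d, hdq, rfl⟩
    exact Or.inl ⟨hmem, (hμ _ hmem).lt_of_ne fun h => hdμ (by linarith)⟩
  · exact Or.inr (by linarith [hrH j d hd])

theorem weightedHomogeneousComponent_mem_span_monomial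
    (hB : Pairwise fun j k => Disjoint (B j) (B k))
    (hr : ∀ j, ∀ d ∈ (r j).support, Finsupp.weight ω (B j) < Finsupp.weight ω d)
    {h : MvPolynomial σ R} (hh : h ∈ Ideal.span (Set.range fun j => monomial (B j) 1 + r j))
    {θ : ℝ} (hθ : h ∈ weightFiltration ω θ) :
    weightedHomogeneousComponent ω θ h ∈
      Ideal.span (Set.range fun j => monomial (B j) (1 : R)) := by
  obtain ⟨δ, hδ, hrδ⟩ := exists_pos_forall_mem_weightFiltration hr
  obtain ⟨q₀, hq₀⟩ := Ideal.mem_span_range_iff_exists_fun.1 hh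
  have step : ∀ q : ι → MvPolynomial σ R, ∑ j, q j * (monomial (B j) 1 + r j) = h →
      ∀ μ ∈ levels ω B q, μ < θ → (∀ ν ∈ levels ω B q, μ ≤ ν) →
      ∃ q', ∑ j, q' j * (monomial (B j) 1 + r j) = h ∧
        ∀ ν ∈ levels ω B q', (ν ∈ levels ω B q ∧ μ < ν) ∨ μ + δ ≤ ν :=
    fun _ hq μ _ hμθ hμ => exists_repr_removing_level hB hδ hrδ hq hμ
      (weightedHomogeneousComponent_eq_zero_of_mem_weightFiltration hθ hμθ)
  obtain ⟨q, hq, hθq⟩ := exists_forall_le_of_descent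
    (fun q => ∑ j, q j * (monomial (B j) 1 + r j) = h) (levels ω B) hδ step hq₀
  rw [← hq, weightedHomogeneousComponent_sum_mul_monomial_add hδ hrδ hθq]
  exact Ideal.sum_mem _ fun j _ =>
    Ideal.mul_mem_left _ _ (Ideal.subset_span (Set.mem_range_self j))

end StandardBasis

end MvPolynomial

section SpecialFiber

variable {N : ℕ} {wt : ℝ} {w : Fin N → ℝ}

theorem wtExp_eq_weight : wtExp wt w = Finsupp.weight (Sum.elim (fun _ => wt) w) := by
  ext e
  simp [wtExp, Finsupp.weight_eq_sum, Fintype.sum_sum_type, mul_comm]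

theorem wtExp_mapDomain_inr (a : Fin N →₀ ℕ) :
    wtExp wt w (a.mapDomain Sum.inr) = ∑ i, (a i : ℝ) * w i := by
  rw [wtExp_eq_weight, Finsupp.weight_sumElim_mapDomain_inr, Finsupp.weight_eq_sum]
  simp only [nsmul_eq_mul]

theorem wtExp_single_inl_add_mapDomain_inr (a : Fin N →₀ ℕ) :
    wtExp wt w (Finsupp.single (Sum.inl ()) 1 + a.mapDomain Sum.inr) =
      wt + ∑ i, (a i : ℝ) * w i := by
  rw [← wtExp_mapDomain_inr, wtExp_eq_weight, map_add, Finsupp.weight_single, one_smul,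
    Sum.elim_inl]

theorem initialForm_eq_weightedHomogeneousComponent {h : MvPolynomial (Unit ⊕ Fin N) ℂ}
    {e : (Unit ⊕ Fin N) →₀ ℕ} (he : e ∈ h.support)
    (hmin : ∀ e' ∈ h.support, wtExp wt w e ≤ wtExp wt w e') :
    initialForm wt w h =
      weightedHomogeneousComponent (Sum.elim (fun _ => wt) w) (wtExp wt w e) h := by
  rw [initialForm, weightedHomogeneousComponent_apply, ← wtExp_eq_weight]
  refine Finset.sum_congr (Finset.filter_congr fun d hd => ?_) fun _ _ => rfl
  exact ⟨fun hd' => le_antisymm (hd' e he) (hmin d hd), fun hd' e' he' => hd' ▸ hmin e' he'⟩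

theorem initialIdeal_span_monomial_add {ι : Type*} [Fintype ι] {B : ι → (Unit ⊕ Fin N) →₀ ℕ}
    (hB : Pairwise fun j k => Disjoint (B j) (B k)) {r : ι → MvPolynomial (Unit ⊕ Fin N) ℂ}
    (hr : ∀ j, ∀ d ∈ (r j).support, wtExp wt w (B j) < wtExp wt w d) :
    initialIdeal wt w (Ideal.span (Set.range fun j => monomial (B j) 1 + r j)) =
      Ideal.span (Set.range fun j => monomial (B j) 1) := by
  apply le_antisymm
  · rw [initialIdeal, Ideal.span_le]
    rintro _ ⟨h, hh, hne, rfl⟩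
    obtain ⟨e, he, hmin⟩ := h.support.exists_min_image (wtExp wt w) (support_nonempty.2 hne)
    rw [initialForm_eq_weightedHomogeneousComponent he hmin]
    rw [wtExp_eq_weight] at hr hmin ⊢
    exact weightedHomogeneousComponent_mem_span_monomial hB hr hh hmin
  · rw [Ideal.span_le]
    rintro _ ⟨j, rfl⟩
    have hBr : B j ∉ (r j).support := fun h => (hr j _ h).false
    have hBmem : B j ∈ (monomial (B j) 1 + r j).support := by
      rw [mem_support_iff, coeff_add, coeff_monomial, if_pos rfl, notMem_support_iff.1 hBr]
      norm_num
    have hBmin : ∀ e ∈ (monomial (B j) 1 + r j).support, wtExp wt w (B j) ≤ wtExp wt w e := by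
      intro e he
      rcases Finset.mem_union.1 (support_add he) with he | he
      · rw [Finset.mem_singleton.1 (support_monomial_subset he)]
      · exact (hr j e he).le
    refine Ideal.subset_span ⟨_, Ideal.subset_span (Set.mem_range_self j),
      support_nonempty.1 ⟨_, hBmem⟩, ?_⟩
    rw [initialForm_eq_weightedHomogeneousComponent hBmem hBmin, map_add,
      weightedHomogeneousComponent_eq_self
        (isWeightedHomogeneous_monomial _ _ _ (by rw [wtExp_eq_weight])),
      weightedHomogeneousComponent_eq_zero' _ _ fun d hd => by
        rw [← wtExp_eq_weight]; exact (hr j d hd).ne', add_zero]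

theorem weight_le_of_initialIdeal_le {κ : Type*} {I : Ideal (MvPolynomial (Unit ⊕ Fin N) ℂ)}
    {b : κ → Fin N →₀ ℕ}
    (hI : initialIdeal wt w I ≤
      Ideal.span (Set.range fun k => monomial ((b k).mapDomain Sum.inr) 1))
    {β : Fin N →₀ ℕ} {g : MvPolynomial (Fin N) ℂ}
    (hg : ∀ a ∈ g.support, monomial a (1 : ℂ) ∉ Ideal.span (Set.range fun k => monomial (b k) 1))
    (hf : monomial (β.mapDomain Sum.inr) 1 + X (Sum.inl ()) * rename Sum.inr g ∈ I)
    {a : Fin N →₀ ℕ} (ha : a ∈ g.support) :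
    ∑ i, (β i : ℝ) * w i ≤ wt + ∑ i, (a i : ℝ) * w i := by
  set f := monomial (β.mapDomain Sum.inr) (1 : ℂ) + X (Sum.inl ()) * rename Sum.inr g
  set t : (Fin N →₀ ℕ) → (Unit ⊕ Fin N) →₀ ℕ :=
    fun a => Finsupp.single (Sum.inl ()) 1 + a.mapDomain Sum.inr
  have hta : t a ∈ f.support := by
    have ht : t a ≠ β.mapDomain Sum.inr := fun h => by
      simpa [t, Finsupp.mapDomain_of_notMem_range] using DFunLike.congr_fun h (Sum.inl ())
    rw [mem_support_iff, coeff_add, coeff_monomial, if_neg ht.symm, zero_add,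
      ← mem_support_iff, mem_support_X_mul_rename_inr ()]
    exact ⟨a, ha, rfl⟩
  by_contra hlt
  obtain ⟨e, he, hmin⟩ := f.support.exists_min_image (wtExp wt w) ⟨_, hta⟩
  have he_in : e ∈ (initialForm wt w f).support := by
    rw [initialForm_eq_weightedHomogeneousComponent he hmin, support_weightedHomogeneousComponent]
    simp [he, wtExp_eq_weight]
  have hin : initialForm wt w f ∈ initialIdeal wt w I :=
    Ideal.subset_span ⟨f, hf, support_nonempty.1 ⟨_, hta⟩, rfl⟩
  obtain ⟨k, hk⟩ := mem_span_range_monomial_iff.1 (hI hin) e he_in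
  rcases Finset.mem_union.1 (support_add he) with he' | he'
  · rw [Finset.mem_singleton.1 (support_monomial_subset he')] at hmin
    have := hmin _ hta
    rw [wtExp_single_inl_add_mapDomain_inr, wtExp_mapDomain_inr] at this
    exact hlt this
  · obtain ⟨a', ha', rfl⟩ := (mem_support_X_mul_rename_inr ()).1 he'
    refine hg a' ha' ?_
    have hba : b k ≤ a' := fun i => by
      simpa [t, Finsupp.mapDomain_apply Sum.inr_injective] using hk (Sum.inr i)
    rw [show monomial a' (1 : ℂ) = monomial (a' - b k) 1 * monomial (b k) 1 by
      rw [monomial_mul, mul_one, tsub_add_cancel_of_le hba]]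
    exact Ideal.mul_mem_left _ _ (Ideal.subset_span (Set.mem_range_self k))

end SpecialFiber

theorem groebner_cone_of_special_fiber_weights_general {N c : ℕ}
    (J : Fin c → Finset (Fin N))
    (hJdisj : ∀ j k, j ≠ k → Disjoint (J j) (J k))
    (b : Fin c → (Fin N →₀ ℕ)) (hb : ∀ j, b j = ∑ i ∈ J j, Finsupp.single i 1)
    (B : Fin c → ((Unit ⊕ Fin N) →₀ ℕ))
    (hB : ∀ j, B j = ∑ i ∈ J j, Finsupp.single (Sum.inr i) 1)
    (I₀ : Ideal (MvPolynomial (Fin N) ℂ))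
    (hI₀ : I₀ = Ideal.span (Set.range fun j => monomial (b j) (1 : ℂ)))
    (g : Fin c → MvPolynomial (Fin N) ℂ)
    (hg : ∀ j, ∀ a ∈ (g j).support, monomial a (1 : ℂ) ∉ I₀)
    (I : Ideal (MvPolynomial (Unit ⊕ Fin N) ℂ))
    (hI : I = Ideal.span (Set.range fun j =>
      monomial (B j) (1 : ℂ) + X (Sum.inl ()) * rename Sum.inr (g j)))
    (wt : ℝ) (w : Fin N → ℝ) :
    ((∀ j, ∀ a ∈ (g j).support,
        (∑ i, ((b j) i : ℝ) * w i) < wt + ∑ i, (a i : ℝ) * w i) →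
      initialIdeal wt w I =
        Ideal.span (Set.range fun j => monomial (B j) (1 : ℂ))) ∧
    ((initialIdeal wt w I =
        Ideal.span (Set.range fun j => monomial (B j) (1 : ℂ))) →
      ∀ j, ∀ a ∈ (g j).support,
        (∑ i, ((b j) i : ℝ) * w i) ≤ wt + ∑ i, (a i : ℝ) * w i) := by
  obtain rfl : B = fun j => (b j).mapDomain Sum.inr := funext fun j => by
    rw [hB, hb, Finsupp.mapDomain_finsetSum]
    simp [Finsupp.mapDomain_single]
  have hsupp : ∀ j, (b j).support ⊆ J j := fun j i hi => by
    rw [hb] at hi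
    simpa [Finsupp.finsetSum_apply, Finsupp.single_apply] using hi
  have hdisj : Pairwise fun j k => Disjoint ((b j).mapDomain (Sum.inr : _ → Unit ⊕ Fin N))
      ((b k).mapDomain Sum.inr) := by
    intro j k hjk
    rw [Finsupp.disjoint_iff, Finsupp.mapDomain_support_of_injective Sum.inr_injective,
      Finsupp.mapDomain_support_of_injective Sum.inr_injective,
      Finset.disjoint_image Sum.inr_injective]
    exact (hJdisj j k hjk).mono (hsupp j) (hsupp k)
  subst hI hI₀
  refine ⟨fun hlt => initialIdeal_span_monomial_add hdisj fun j d hd => ?_,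
    fun hin j a ha => weight_le_of_initialIdeal_le hin.le (hg j)
      (Ideal.subset_span (Set.mem_range_self j)) ha⟩
  obtain ⟨a, ha, rfl⟩ := (mem_support_X_mul_rename_inr ()).1 hd
  rw [wtExp_single_inl_add_mapDomain_inr, wtExp_mapDomain_inr]
  exact hlt j a ha

/-- Description of the Gröbner cone of special fiber weights of the
degeneration `I = ⟨m_j + t·g_j⟩`: (i) if `w_t + ⟨a, w⟩ > ⟨b_j, w⟩` for all `j`
and all exponents `a` of `g_j`, then the initial ideal of `I` is `⟨m₁,…,m_c⟩`;
(ii) conversely, if the initial ideal is `⟨m₁,…,m_c⟩` then the corresponding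
weak inequalities hold. -/
theorem groebner_cone_of_special_fiber_weights {N c : ℕ}
    (J : Fin c → Finset (Fin N)) (hJne : ∀ j, (J j).Nonempty)
    (hJdisj : ∀ j k, j ≠ k → Disjoint (J j) (J k))
    (b : Fin c → (Fin N →₀ ℕ)) (hb : ∀ j, b j = ∑ i ∈ J j, Finsupp.single i 1)
    (B : Fin c → ((Unit ⊕ Fin N) →₀ ℕ))
    (hB : ∀ j, B j = ∑ i ∈ J j, Finsupp.single (Sum.inr i) 1)
    (I₀ : Ideal (MvPolynomial (Fin N) ℂ))
    (hI₀ : I₀ = Ideal.span (Set.range fun j => monomial (b j) (1 : ℂ)))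
    (g : Fin c → MvPolynomial (Fin N) ℂ) (hgne : ∀ j, g j ≠ 0)
    (hg : ∀ j, ∀ a ∈ (g j).support, monomial a (1 : ℂ) ∉ I₀)
    (I : Ideal (MvPolynomial (Unit ⊕ Fin N) ℂ))
    (hI : I = Ideal.span (Set.range fun j =>
      monomial (B j) (1 : ℂ) + X (Sum.inl ()) * rename Sum.inr (g j)))
    (wt : ℝ) (w : Fin N → ℝ) :
    ((∀ j, ∀ a ∈ (g j).support,
        (∑ i, ((b j) i : ℝ) * w i) < wt + ∑ i, (a i : ℝ) * w i) →
      initialIdeal wt w I =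
        Ideal.span (Set.range fun j => monomial (B j) (1 : ℂ))) ∧
    ((initialIdeal wt w I =
        Ideal.span (Set.range fun j => monomial (B j) (1 : ℂ))) →
      ∀ j, ∀ a ∈ (g j).support,
        (∑ i, ((b j) i : ℝ) * w i) ≤ wt + ∑ i, (a i : ℝ) * w i) :=
  groebner_cone_of_special_fiber_weights_general J hJdisj b hb B hB I₀ hI₀ g hg I hI wt w

end
end

section
/- Let v₁,…,v_N ∈ ℤⁿ be vectors whose nonnegative real span equals all of ℝⁿ (i.e., every element of ℝⁿ is a nonnegative real linear combination of v₁,…,v_N). Then for every w ∈ ℤ^N the set {a ∈ ℕ^N : there exists u ∈ ℤⁿ with a_i = w_i + ⟨u, v_i⟩ for all i = 1,…,N} is finite. -/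
/-!
The exponent vector `a` is determined by `u`, and `u` ranges over the integer points of the
polyhedron `{u | ⟨u, v i⟩ ≥ -w i for all i}`. This polyhedron is bounded: writing `±e_j` as a
nonnegative combination `∑ c i • v i` gives `±u_j = ∑ c i ⟨u, v i⟩ ≥ -∑ c i w i`.
-/

open Finset

section

variable {ι κ : Type*} [Fintype ι] [Fintype κ]

def PositivelySpans (v : ι → κ → ℝ) : Prop :=
  ∀ x : κ → ℝ, ∃ c : ι → ℝ, (∀ i, 0 ≤ c i) ∧ x = ∑ i, c i • v i

lemma dotProduct_le_dotProduct_sum_smul {R : Type*} [CommRing R] [PartialOrder R]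
    [IsOrderedRing R] {v : ι → κ → R} {b c : ι → R} {u : κ → R} (hc : ∀ i, 0 ≤ c i)
    (hb : ∀ i, b i ≤ u ⬝ᵥ v i) : c ⬝ᵥ b ≤ u ⬝ᵥ ∑ i, c i • v i := by
  simp only [dotProduct_sum, dotProduct_smul, smul_eq_mul]
  exact sum_le_sum fun i _ => mul_le_mul_of_nonneg_left (hb i) (hc i)

lemma PositivelySpans.bddBelow_dotProduct {v : ι → κ → ℝ} (hv : PositivelySpans v)
    (b : ι → ℝ) (x : κ → ℝ) :
    ∃ L : ℝ, ∀ u ∈ {u : κ → ℝ | ∀ i, b i ≤ u ⬝ᵥ v i}, L ≤ u ⬝ᵥ x := by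
  obtain ⟨c, hc, rfl⟩ := hv x
  exact ⟨c ⬝ᵥ b, fun u hu => dotProduct_le_dotProduct_sum_smul hc hu⟩

lemma PositivelySpans.exists_subset_Icc [DecidableEq κ] {v : ι → κ → ℝ}
    (hv : PositivelySpans v) (b : ι → ℝ) :
    ∃ l r : κ → ℝ, {u : κ → ℝ | ∀ i, b i ≤ u ⬝ᵥ v i} ⊆ Set.Icc l r := by
  choose l hl using fun j => hv.bddBelow_dotProduct b (Pi.single j 1)
  choose m hm using fun j => hv.bddBelow_dotProduct b (Pi.single j (-1))
  refine ⟨l, -m, fun u hu => ⟨fun j => ?_, fun j => ?_⟩⟩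
  · simpa using hl j u hu
  · simpa [le_neg] using hm j u hu

lemma finite_setOf_intCast_mem_Icc [DecidableEq κ] (l r : κ → ℝ) :
    {u : κ → ℤ | (fun j => (u j : ℝ)) ∈ Set.Icc l r}.Finite := by
  refine (Set.finite_Icc (fun j => ⌈l j⌉) (fun j => ⌊r j⌋)).subset fun u hu => ?_
  exact ⟨fun j => Int.ceil_le.mpr (hu.1 j), fun j => Int.le_floor.mpr (hu.2 j)⟩

end

/-- If the vectors `v₁, …, v_N ∈ ℤⁿ` positively span `ℝⁿ` (as the ray
generators of a complete fan do), then for every `w ∈ ℤ^N` there are only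
finitely many `a ∈ ℕ^N` of the form `a i = w i + ⟨u, v i⟩` for some `u ∈ ℤⁿ`;
i.e., each graded piece of the Cox ring is finite-dimensional. -/
theorem finite_monomials_of_fixed_degree {n N : ℕ} (v : Fin N → Fin n → ℤ)
    (hspan : ∀ x : Fin n → ℝ, ∃ c : Fin N → ℝ, (∀ i, 0 ≤ c i) ∧
      x = ∑ i, c i • (fun j => (v i j : ℝ)))
    (w : Fin N → ℤ) :
    {a : Fin N → ℕ | ∃ u : Fin n → ℤ,
      ∀ i, (a i : ℤ) = w i + ∑ j, u j * v i j}.Finite := by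
  obtain ⟨l, r, hP⟩ := PositivelySpans.exists_subset_Icc hspan fun i => -(w i : ℝ)
  refine ((finite_setOf_intCast_mem_Icc l r).image
    fun u i => (w i + ∑ j, u j * v i j).toNat).subset ?_
  rintro a ⟨u, hu⟩
  refine ⟨u, hP fun i => ?_, funext fun i => by simp [← hu i]⟩
  have hai : (0 : ℤ) ≤ w i + ∑ j, u j * v i j := hu i ▸ (a i).cast_nonneg
  simp only [dotProduct, neg_le_iff_add_nonneg']
  exact_mod_cast hai
end

section
/- Let Δ₁,…,Δ_c and ∇₁,…,∇_c be lattice polytopes in ℝⁿ (convex hulls of finitely many points of ℤⁿ), each containing the origin, such that: (a) ⟨x, y⟩ ≥ −δ_{ij} for all x ∈ Δ_i, y ∈ ∇_j; (b) the Minkowski sums Δ := Δ₁ + ⋯ + Δ_c and ∇ := ∇₁ + ⋯ + ∇_c are reflexive, i.e., contain 0 in their interiors and their polar duals Δ* = {y : ⟨x, y⟩ ≥ −1 ∀ x ∈ Δ} and ∇* are again lattice polytopes; (c) Δ* = conv(∇₁ ∪ … ∪ ∇_c) and ∇* = conv(Δ₁ ∪ … ∪ Δ_c). For a nonempty proper face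 F of ∇ (a face means an exposed face: the set of points where some linear functional attains its minimum) let F^∨ := {x ∈ ∇* : ⟨x, y⟩ = −1 for all y ∈ F}, the dual face of ∇*, and define dual faces of faces of Δ analogously using Δ*. Then the assignment F ↦ (F^∨ ∩ Δ₁) + ⋯ + (F^∨ ∩ Δ_c) (Minkowski sum) sends every nonempty proper face F of ∇ such that F^∨ ∩ Δ_i contains a nonzero point for each i = 1,…,c to a nonempty proper face G of Δ such that G^∨ ∩ ∇_j contains a nonzero point for each j = 1,…,c, and it is an inclusion-reversing bijection between these two sets of faces. -/
/-!
The dual face `F^∨` is exposed by a single point: if `y₀` is the barycentre of the vertices of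
`F`, then `F^∨ = {x ∈ ∇* : ⟨x, y₀⟩ = -1}`. Since every `x ∈ Δᵢ` satisfies `⟨x, y₀⟩ ≥ -1`, the
functional `⟨·, y₀⟩` cuts `G = Σᵢ (F^∨ ∩ Δᵢ)` out of `Δ` at its minimum `-c`, so `G` is a face.
The pairing inequalities `⟨x, y⟩ ≥ -δᵢⱼ` are tight in every decomposition: a point `y = Σⱼ yⱼ` of
`F` has `⟨x, yⱼ⟩ = -δᵢⱼ` for `x ∈ F^∨ ∩ Δᵢ`, whence `yⱼ ∈ G^∨ ∩ ∇ⱼ` and `F ⊆ Σⱼ (G^∨ ∩ ∇ⱼ)`.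
Conversely, by (c) `F^∨` is the convex hull of the pieces `F^∨ ∩ Δᵢ`, all of which pair to `-1`
with any `y ∈ Σⱼ (G^∨ ∩ ∇ⱼ)`; since `F^∨` contains the rescaled functional exposing `F`, `y ∈ F`.
So the two mirror maps are mutually inverse, and both reverse inclusions because `F ↦ F^∨` does.
-/

/-- A lattice polytope in `ℝⁿ`: the convex hull of finitely many points of
`ℤⁿ`. -/
def IsLatticePolytope {n : ℕ} (Q : Set (Fin n → ℝ)) : Prop :=
  ∃ s : Finset (Fin n → ℤ),
    Q = convexHull ℝ ((fun z : Fin n → ℤ => fun i => (z i : ℝ)) '' ↑s)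

/-- The polar dual `Q* = {x : ⟨x, y⟩ ≥ -1 for all y ∈ Q}` of `Q ⊆ ℝⁿ`. -/
def polarDual {n : ℕ} (Q : Set (Fin n → ℝ)) : Set (Fin n → ℝ) :=
  {x | ∀ y ∈ Q, -1 ≤ ∑ k, x k * y k}

/-- The Minkowski sum of the sets `A 0, …, A (c-1)` in `ℝⁿ`. -/
def minkowskiSum {n c : ℕ} (A : Fin c → Set (Fin n → ℝ)) : Set (Fin n → ℝ) :=
  {y | ∃ z : Fin c → Fin n → ℝ, (∀ j, z j ∈ A j) ∧ y = ∑ j, z j}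

/-- `F` is a face of `P`: either `F = P` or `F` is an exposed face, i.e. the
set of points of `P` at which some linear functional attains its minimum on
`P`. -/
def IsFaceOf {n : ℕ} (P F : Set (Fin n → ℝ)) : Prop :=
  F = P ∨ ∃ ℓ : (Fin n → ℝ) →ₗ[ℝ] ℝ, F = {x ∈ P | ∀ y ∈ P, ℓ x ≤ ℓ y}

/-- The dual face `F^∨ = {x ∈ Q* : ⟨x, y⟩ = -1 for all y ∈ F}` in the polar
dual of `Q` of a face `F` of `Q`. -/
def dualFace {n : ℕ} (Q F : Set (Fin n → ℝ)) : Set (Fin n → ℝ) :=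
  {x ∈ polarDual Q | ∀ y ∈ F, ∑ k, x k * y k = -1}

section Convex

variable {E : Type*} [AddCommGroup E] [Module ℝ E]

theorem convexHull_inter_hyperplane {s : Set E} (φ : E →ₗ[ℝ] ℝ) {b : ℝ}
    (hs : ∀ p ∈ s, b ≤ φ p) :
    convexHull ℝ s ∩ {x | φ x = b} = convexHull ℝ {p ∈ s | φ p = b} := by
  classical
  refine subset_antisymm ?_ (convexHull_min
    (fun p hp => ⟨subset_convexHull ℝ s hp.1, hp.2⟩)
    ((convex_convexHull ℝ s).inter (convex_hyperplane φ.isLinear b)))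
  rintro x ⟨hx, hxb⟩
  replace hxb : φ x = b := hxb
  rw [convexHull_eq] at hx
  obtain ⟨ι, t, w, z, hw0, hw1, hz, rfl⟩ := hx
  have hφ : φ (t.centerMass w z) = ∑ i ∈ t, w i * φ (z i) := by
    simp [Finset.centerMass, hw1, smul_eq_mul]
  have heq : ∀ i ∈ t, w i * b = w i * φ (z i) := by
    refine (Finset.sum_eq_sum_iff_of_le
      fun i hi => mul_le_mul_of_nonneg_left (hs _ (hz i hi)) (hw0 i hi)).mp ?_
    rw [← hφ, hxb, ← Finset.sum_mul, hw1, one_mul]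
  rw [← Finset.centerMass_filter_ne_zero]
  refine Finset.centerMass_mem_convexHull _ (fun i hi => hw0 i (Finset.mem_filter.mp hi).1)
    (by rw [Finset.sum_filter_ne_zero, hw1]; exact one_pos) fun i hi => ?_
  obtain ⟨hit, hwi⟩ := Finset.mem_filter.mp hi
  exact ⟨hz i hit, (mul_left_cancel₀ hwi (heq i hit)).symm⟩

/-- The barycentre of `T` lies in the relative interior of its convex hull. -/
theorem exists_mem_convexHull_forall_eq_of_le (T : Finset E) (hT : T.Nonempty) :
    ∃ y₀ ∈ convexHull ℝ (T : Set E), ∀ (φ : E →ₗ[ℝ] ℝ) (b : ℝ), (∀ p ∈ T, b ≤ φ p) →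
      φ y₀ = b → ∀ y ∈ convexHull ℝ (T : Set E), φ y = b := by
  have hcard : (T.card : ℝ) ≠ 0 := Nat.cast_ne_zero.mpr hT.card_pos.ne'
  have hw1 : ∑ _p ∈ T, (T.card : ℝ)⁻¹ = 1 := by
    rw [Finset.sum_const, nsmul_eq_mul, mul_inv_cancel₀ hcard]
  refine ⟨∑ p ∈ T, (T.card : ℝ)⁻¹ • p, (convex_convexHull ℝ _).sum_mem
    (fun _ _ => by positivity) hw1 fun p hp => subset_convexHull ℝ _ hp, ?_⟩
  intro φ b hb hφ y hy
  have heq : ∀ p ∈ T, (T.card : ℝ)⁻¹ * b = (T.card : ℝ)⁻¹ * φ p := by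
    refine (Finset.sum_eq_sum_iff_of_le
      fun p hp => mul_le_mul_of_nonneg_left (hb p hp) (by positivity)).mp ?_
    rw [← Finset.sum_mul, hw1, one_mul, ← hφ, map_sum]
    simp only [map_smul, smul_eq_mul]
  refine convexHull_min (fun p hp => ?_) (convex_hyperplane φ.isLinear b) hy
  exact (mul_left_cancel₀ (inv_ne_zero hcard) (heq p hp)).symm

end Convex

section Polytope

variable {n c : ℕ}

open scoped Pointwise in
theorem minkowskiSum_eq_sum (A : Fin c → Set (Fin n → ℝ)) : minkowskiSum A = ∑ j, A j := by
  ext x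
  rw [Set.mem_fintype_sum]
  exact ⟨fun ⟨z, hz, hx⟩ => ⟨z, hz, hx.symm⟩, fun ⟨z, hz, hx⟩ => ⟨z, hz, hx.symm⟩⟩

theorem minkowskiSum_mono {A B : Fin c → Set (Fin n → ℝ)} (h : ∀ j, A j ⊆ B j) :
    minkowskiSum A ⊆ minkowskiSum B :=
  fun _ ⟨z, hz, hx⟩ => ⟨z, fun j => h j (hz j), hx⟩

theorem minkowskiSum_fin_zero (A : Fin 0 → Set (Fin n → ℝ)) : minkowskiSum A = {0} := by
  ext x
  simp [minkowskiSum]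

theorem IsLatticePolytope.exists_finset {Q : Set (Fin n → ℝ)} (hQ : IsLatticePolytope Q) :
    ∃ T : Finset (Fin n → ℝ), Q = convexHull ℝ (T : Set (Fin n → ℝ)) := by
  classical
  obtain ⟨s, rfl⟩ := hQ
  exact ⟨s.image fun z i => (z i : ℝ), by rw [Finset.coe_image]⟩

open scoped Pointwise in
theorem exists_finset_minkowskiSum_eq_convexHull {A : Fin c → Set (Fin n → ℝ)}
    (hA : ∀ j, ∃ T : Finset (Fin n → ℝ), A j = convexHull ℝ (T : Set (Fin n → ℝ))) :
    ∃ T : Finset (Fin n → ℝ), minkowskiSum A = convexHull ℝ (T : Set (Fin n → ℝ)) := by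
  classical
  choose S hS using hA
  refine ⟨(Fintype.piFinset S).image fun z => ∑ j, z j, ?_⟩
  have hT : (((Fintype.piFinset S).image fun z => ∑ j, z j : Finset (Fin n → ℝ)) :
      Set (Fin n → ℝ)) = minkowskiSum fun j => (S j : Set (Fin n → ℝ)) := by
    ext x
    simp only [Finset.coe_image, Set.mem_image, Finset.mem_coe, Fintype.mem_piFinset]
    exact ⟨fun ⟨z, hz, hx⟩ => ⟨z, hz, hx.symm⟩, fun ⟨z, hz, hx⟩ => ⟨z, hz, hx.symm⟩⟩
  rw [hT, minkowskiSum_eq_sum, minkowskiSum_eq_sum, convexHull_sum]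
  exact Finset.sum_congr rfl fun j _ => hS j

theorem mem_polarDual_iff {Q : Set (Fin n → ℝ)} {x : Fin n → ℝ} :
    x ∈ polarDual Q ↔ ∀ y ∈ Q, -1 ≤ x ⬝ᵥ y :=
  Iff.rfl

theorem dualFace_anti {Q F F' : Set (Fin n → ℝ)} (h : F ⊆ F') : dualFace Q F' ⊆ dualFace Q F :=
  fun _ hx => ⟨hx.1, fun y hy => hx.2 y (h hy)⟩

theorem mem_dualFace_singleton {Q : Set (Fin n → ℝ)} {x y : Fin n → ℝ} :
    x ∈ dualFace Q {y} ↔ x ∈ polarDual Q ∧ x ⬝ᵥ y = -1 := by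
  simp [dualFace, dotProduct]

theorem dotProduct_eq_of_mem_dualFace {Q F : Set (Fin n → ℝ)} {x y : Fin n → ℝ}
    (hx : x ∈ dualFace Q F) (hy : y ∈ F) : x ⬝ᵥ y = -1 :=
  hx.2 y hy

theorem ne_zero_of_mem_dualFace {Q G : Set (Fin n → ℝ)} (hG : G.Nonempty) {x : Fin n → ℝ}
    (hx : x ∈ dualFace Q G) : x ≠ 0 := by
  rintro rfl
  obtain ⟨y, hy⟩ := hG
  simpa using hx.2 y hy

theorem isFaceOf_setOf_eq {P : Set (Fin n → ℝ)} (φ : (Fin n → ℝ) →ₗ[ℝ] ℝ) {b : ℝ}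
    (hb : ∀ y ∈ P, b ≤ φ y) (hattain : ∃ x ∈ P, φ x = b) : IsFaceOf P {x ∈ P | φ x = b} := by
  obtain ⟨x₀, hx₀, hx₀b⟩ := hattain
  refine Or.inr ⟨φ, Set.ext fun x => ⟨fun ⟨hx, hxb⟩ => ⟨hx, fun y hy => hxb ▸ hb y hy⟩,
    fun ⟨hx, hxmin⟩ => ⟨hx, le_antisymm (hx₀b ▸ hxmin x₀ hx₀) (hb x hx)⟩⟩⟩

/-- A nonempty proper face of a body with `0` in its interior lies at a negative level of its
exposing functional; rescaling that functional to level `-1` gives a point of the polar dual. -/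
theorem IsFaceOf.exists_polarDual_eq {P F : Set (Fin n → ℝ)} (hP : (0 : Fin n → ℝ) ∈ interior P)
    (hF : IsFaceOf P F) (hne : F.Nonempty) (hFP : F ≠ P) :
    ∃ u ∈ polarDual P, F = {y ∈ P | u ⬝ᵥ y = -1} := by
  classical
  obtain ⟨ℓ, rfl⟩ := hF.resolve_left hFP
  obtain ⟨f₀, hf₀P, hf₀⟩ := hne
  obtain ⟨y₁, hy₁P, hy₁F⟩ : ∃ y₁ ∈ P, y₁ ∉ {x ∈ P | ∀ y ∈ P, ℓ x ≤ ℓ y} := by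
    by_contra! h
    exact hFP (subset_antisymm (fun _ hx => hx.1) h)
  have hlt : ℓ f₀ < ℓ y₁ := by
    refine (hf₀ y₁ hy₁P).lt_of_ne fun h => hy₁F ⟨hy₁P, fun y hy => ?_⟩
    exact h ▸ hf₀ y hy
  have hneg : ℓ f₀ < 0 := by
    have hnhds : ∀ᶠ t in nhdsWithin (0 : ℝ) (Set.Iio 0), t • y₁ ∈ P := by
      have hcont : Filter.Tendsto (fun t : ℝ => t • y₁) (nhds 0) (nhds 0) :=
        Continuous.tendsto' (by fun_prop) 0 0 (zero_smul ℝ y₁)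
      exact nhdsWithin_le_nhds (hcont (mem_interior_iff_mem_nhds.mp hP))
    obtain ⟨t, htP, ht⟩ := (hnhds.and self_mem_nhdsWithin).exists
    have := hf₀ _ htP
    rw [map_smul, smul_eq_mul] at this
    nlinarith [ht]
  set u := (dotProductEquiv ℝ (Fin n)).symm ((-ℓ f₀)⁻¹ • ℓ)
  have hu : ∀ y, u ⬝ᵥ y = ℓ y / -ℓ f₀ := fun y => by
    rw [← dotProductEquiv_apply_apply, LinearEquiv.apply_symm_apply, LinearMap.smul_apply,
      smul_eq_mul, inv_mul_eq_div]
  refine ⟨u, mem_polarDual_iff.mpr fun y hy => ?_, Set.ext fun y => ?_⟩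
  · rw [hu, le_div_iff₀ (neg_pos.mpr hneg)]
    linarith [hf₀ y hy]
  · rw [Set.mem_ofPred_eq, Set.mem_ofPred_eq, hu, div_eq_iff (neg_ne_zero.mpr hneg.ne)]
    exact ⟨fun ⟨hyP, hy⟩ => ⟨hyP, by linarith [hy f₀ hf₀P, hf₀ y hyP]⟩,
      fun ⟨hyP, hy⟩ => ⟨hyP, fun z hz => by linarith [hf₀ z hz]⟩⟩

theorem exists_dualFace_eq_dualFace_singleton {P F : Set (Fin n → ℝ)} {T : Finset (Fin n → ℝ)}
    (hPT : P = convexHull ℝ (T : Set (Fin n → ℝ))) {u : Fin n → ℝ} (hu : u ∈ polarDual P)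
    (hFu : F = {y ∈ P | u ⬝ᵥ y = -1}) (hne : F.Nonempty) :
    ∃ y₀ ∈ F, dualFace P F = dualFace P {y₀} := by
  classical
  have hTP : ∀ p ∈ T, p ∈ P := fun p hp => hPT ▸ subset_convexHull ℝ _ hp
  set TF := T.filter fun p => u ⬝ᵥ p = -1
  have hF : F = convexHull ℝ (TF : Set (Fin n → ℝ)) := by
    have := convexHull_inter_hyperplane (dotProductBilin ℝ ℝ u)
      fun p (hp : p ∈ (T : Set (Fin n → ℝ))) => hu p (hTP p hp)
    rw [← hPT] at this
    rw [hFu, Finset.coe_filter]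
    exact this
  obtain ⟨y₀, hy₀, hrelint⟩ :=
    exists_mem_convexHull_forall_eq_of_le TF (Finset.coe_nonempty.mp
      (convexHull_nonempty_iff.mp (hF ▸ hne)))
  refine ⟨y₀, hF ▸ hy₀, subset_antisymm (dualFace_anti (Set.singleton_subset_iff.mpr (hF ▸ hy₀)))
    fun x hx => ⟨hx.1, fun y hy => ?_⟩⟩
  rw [mem_dualFace_singleton] at hx
  exact hrelint (dotProductBilin ℝ ℝ x) (-1)
    (fun p hp => hx.1 p (hTP p (Finset.mem_filter.mp hp).1)) hx.2 y (hF ▸ hy)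

def NefPairing (Δ Nb : Fin c → Set (Fin n → ℝ)) : Prop :=
  ∀ i j, ∀ x ∈ Δ i, ∀ y ∈ Nb j, -(if i = j then (1 : ℝ) else 0) ≤ x ⬝ᵥ y

def mirrorFace (Q : Set (Fin n → ℝ)) (Δ : Fin c → Set (Fin n → ℝ)) (F : Set (Fin n → ℝ)) :
    Set (Fin n → ℝ) :=
  minkowskiSum fun i => dualFace Q F ∩ Δ i

def admissibleFaces (P : Set (Fin n → ℝ)) (Δ : Fin c → Set (Fin n → ℝ)) :
    Set (Set (Fin n → ℝ)) :=
  {F | IsFaceOf P F ∧ F.Nonempty ∧ F ≠ P ∧ ∀ i, ∃ x ∈ dualFace P F ∩ Δ i, x ≠ 0}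

section MirrorFace

variable {Δ Nb : Fin c → Set (Fin n → ℝ)} {Q F : Set (Fin n → ℝ)}

theorem mirrorFace_subset : mirrorFace Q Δ F ⊆ minkowskiSum Δ :=
  minkowskiSum_mono fun _ => Set.inter_subset_right

theorem mirrorFace_anti {F' : Set (Fin n → ℝ)} (h : F ⊆ F') :
    mirrorFace Q Δ F' ⊆ mirrorFace Q Δ F :=
  minkowskiSum_mono fun _ => Set.inter_subset_inter_left _ (dualFace_anti h)

theorem dotProduct_eq_neg_card_of_mem_mirrorFace {x y : Fin n → ℝ} (hx : x ∈ mirrorFace Q Δ F)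
    (hy : y ∈ F) : x ⬝ᵥ y = -c := by
  obtain ⟨z, hz, rfl⟩ := hx
  rw [sum_dotProduct, Finset.sum_congr rfl fun i _ => dotProduct_eq_of_mem_dualFace (hz i).1 hy]
  simp

theorem mirrorFace_ne (hc : c ≠ 0) (hF : F.Nonempty) (h0 : (0 : Fin n → ℝ) ∈ minkowskiSum Δ) :
    mirrorFace Q Δ F ≠ minkowskiSum Δ := by
  intro h
  obtain ⟨y, hy⟩ := hF
  have := dotProduct_eq_neg_card_of_mem_mirrorFace (h ▸ h0) hy
  simp_all

end MirrorFace

namespace NefPairing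

variable {Δ Nb : Fin c → Set (Fin n → ℝ)}

theorem symm (h : NefPairing Δ Nb) : NefPairing Nb Δ := fun j i y hy x hx => by
  simpa only [dotProduct_comm, eq_comm] using h i j x hx y hy

theorem subset_polarDual (h : NefPairing Δ Nb) (i : Fin c) :
    Δ i ⊆ polarDual (minkowskiSum Nb) := by
  rintro x hx _ ⟨z, hz, rfl⟩
  calc (-1 : ℝ) = ∑ j, -(if i = j then (1 : ℝ) else 0) := by simp
    _ ≤ ∑ j, x ⬝ᵥ z j := Finset.sum_le_sum fun j _ => h i j x hx (z j) (hz j)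
    _ = x ⬝ᵥ ∑ j, z j := (dotProduct_sum ..).symm

theorem neg_card_le_dotProduct (h : NefPairing Δ Nb) {x y : Fin n → ℝ}
    (hx : x ∈ minkowskiSum Δ) (hy : y ∈ minkowskiSum Nb) : -(c : ℝ) ≤ x ⬝ᵥ y := by
  obtain ⟨z, hz, rfl⟩ := hx
  calc -(c : ℝ) = ∑ _i : Fin c, (-1 : ℝ) := by simp
    _ ≤ ∑ i, z i ⬝ᵥ y := Finset.sum_le_sum fun i _ => h.subset_polarDual i (hz i) y hy
    _ = (∑ i, z i) ⬝ᵥ y := (sum_dotProduct ..).symm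

theorem dotProduct_eq_of_dotProduct_sum_eq (h : NefPairing Δ Nb) {i : Fin c} {x : Fin n → ℝ}
    (hx : x ∈ Δ i) {z : Fin c → Fin n → ℝ} (hz : ∀ j, z j ∈ Nb j)
    (hsum : x ⬝ᵥ ∑ j, z j = -1) (j : Fin c) : x ⬝ᵥ z j = -(if i = j then 1 else 0) := by
  refine ((Finset.sum_eq_sum_iff_of_le fun j _ => h i j x hx (z j) (hz j)).mp ?_ j
    (Finset.mem_univ j)).symm
  rw [← dotProduct_sum, hsum]
  simp

theorem dotProduct_eq_of_sum_dotProduct_eq (h : NefPairing Δ Nb) {j : Fin c} {y : Fin n → ℝ}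
    (hy : y ∈ Nb j) {z : Fin c → Fin n → ℝ} (hz : ∀ i, z i ∈ Δ i)
    (hsum : (∑ i, z i) ⬝ᵥ y = -1) (i : Fin c) : z i ⬝ᵥ y = -(if i = j then 1 else 0) := by
  simpa only [dotProduct_comm, eq_comm] using
    h.symm.dotProduct_eq_of_dotProduct_sum_eq hy hz (by rwa [dotProduct_comm]) i

theorem mirrorFace_eq (h : NefPairing Δ Nb) {F : Set (Fin n → ℝ)} {y₀ : Fin n → ℝ}
    (hy₀ : y₀ ∈ minkowskiSum Nb)
    (hF : dualFace (minkowskiSum Nb) F = dualFace (minkowskiSum Nb) {y₀}) :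
    mirrorFace (minkowskiSum Nb) Δ F = {x ∈ minkowskiSum Δ | x ⬝ᵥ y₀ = -c} := by
  have hG : mirrorFace (minkowskiSum Nb) Δ F = mirrorFace (minkowskiSum Nb) Δ {y₀} := by
    rw [mirrorFace, hF, mirrorFace]
  refine subset_antisymm (fun x hx => ⟨mirrorFace_subset hx,
    dotProduct_eq_neg_card_of_mem_mirrorFace (hG ▸ hx) (Set.mem_singleton y₀)⟩) ?_
  rintro _ ⟨⟨z, hz, rfl⟩, hval⟩
  have hle : ∀ i ∈ Finset.univ, (-1 : ℝ) ≤ z i ⬝ᵥ y₀ := fun i _ =>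
    mem_polarDual_iff.mp (h.subset_polarDual i (hz i)) y₀ hy₀
  have heq := (Finset.sum_eq_sum_iff_of_le hle).mp (by rw [← sum_dotProduct, hval]; simp)
  exact ⟨z, fun i => ⟨hF ▸ mem_dualFace_singleton.mpr
    ⟨h.subset_polarDual i (hz i), (heq i (Finset.mem_univ i)).symm⟩, hz i⟩, rfl⟩

theorem isFaceOf_mirrorFace (h : NefPairing Δ Nb) {F : Set (Fin n → ℝ)} {y₀ : Fin n → ℝ}
    (hy₀ : y₀ ∈ minkowskiSum Nb)
    (hF : dualFace (minkowskiSum Nb) F = dualFace (minkowskiSum Nb) {y₀})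
    (hne : (mirrorFace (minkowskiSum Nb) Δ F).Nonempty) :
    IsFaceOf (minkowskiSum Δ) (mirrorFace (minkowskiSum Nb) Δ F) := by
  rw [h.mirrorFace_eq hy₀ hF] at hne ⊢
  obtain ⟨x, hx, hxy₀⟩ := hne
  exact isFaceOf_setOf_eq ((dotProductBilin ℝ ℝ).flip y₀)
    (fun x hx => h.neg_card_le_dotProduct hx hy₀) ⟨x, hx, hxy₀⟩

theorem mem_dualFace_mirrorFace (h : NefPairing Δ Nb) {Q F : Set (Fin n → ℝ)} {y : Fin n → ℝ}
    (hy : y ∈ F) {z : Fin c → Fin n → ℝ} (hz : ∀ j, z j ∈ Nb j) (hyz : y = ∑ j, z j)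
    (j : Fin c) : z j ∈ dualFace (minkowskiSum Δ) (mirrorFace Q Δ F) := by
  refine ⟨h.symm.subset_polarDual j (hz j), ?_⟩
  rintro _ ⟨x, hx, rfl⟩
  have hxz : ∀ i, z j ⬝ᵥ x i = -(if i = j then 1 else 0) := fun i => by
    rw [dotProduct_comm]
    exact h.dotProduct_eq_of_dotProduct_sum_eq (hx i).2 hz
      (hyz ▸ dotProduct_eq_of_mem_dualFace (hx i).1 hy) j
  change z j ⬝ᵥ ∑ i, x i = -1
  rw [dotProduct_sum, Finset.sum_congr rfl fun i _ => hxz i]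
  simp

theorem subset_mirrorFace_mirrorFace (h : NefPairing Δ Nb) {Q F : Set (Fin n → ℝ)}
    (hFN : F ⊆ minkowskiSum Nb) : F ⊆ mirrorFace (minkowskiSum Δ) Nb (mirrorFace Q Δ F) := by
  intro y hy
  obtain ⟨z, hz, hyz⟩ := hFN hy
  exact ⟨z, fun j => ⟨h.mem_dualFace_mirrorFace hy hz hyz j, hz j⟩, hyz⟩

theorem exists_ne_zero_mem_dualFace_mirrorFace (h : NefPairing Δ Nb) {Q F : Set (Fin n → ℝ)}
    (hFN : F ⊆ minkowskiSum Nb) (hF : F.Nonempty) (hne : (mirrorFace Q Δ F).Nonempty)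
    (j : Fin c) : ∃ y ∈ dualFace (minkowskiSum Δ) (mirrorFace Q Δ F) ∩ Nb j, y ≠ 0 := by
  obtain ⟨y, hy⟩ := hF
  obtain ⟨z, hz, hyz⟩ := hFN hy
  have hzj := h.mem_dualFace_mirrorFace (Q := Q) hy hz hyz j
  exact ⟨z j, ⟨hzj, hz j⟩, ne_zero_of_mem_dualFace hne hzj⟩

/-- Completing `x` by the `ξ i'` (`i' ≠ i`) to a point of the mirror face, tightness of the pairing
inequalities shows that `x` pairs to `-δᵢⱼ` with the `j`-th summand of `y`. -/
theorem dotProduct_eq_of_mem_mirrorFace_mirrorFace (h : NefPairing Δ Nb)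
    {Q F : Set (Fin n → ℝ)} {ξ : Fin c → Fin n → ℝ} (hξ : ∀ i, ξ i ∈ dualFace Q F ∩ Δ i)
    {i : Fin c} {x : Fin n → ℝ} (hx : x ∈ dualFace Q F ∩ Δ i) {y : Fin n → ℝ}
    (hy : y ∈ mirrorFace (minkowskiSum Δ) Nb (mirrorFace Q Δ F)) : x ⬝ᵥ y = -1 := by
  classical
  obtain ⟨z, hz, rfl⟩ := hy
  have hξx : ∀ i', Function.update ξ i x i' ∈ dualFace Q F ∩ Δ i' := by
    intro i'
    rcases eq_or_ne i' i with rfl | hi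
    · simpa using hx
    · simpa [hi] using hξ i'
  have hG : ∑ i', Function.update ξ i x i' ∈ mirrorFace Q Δ F := ⟨_, hξx, rfl⟩
  have hxz : ∀ j, x ⬝ᵥ z j = -(if i = j then 1 else 0) := fun j => by
    simpa using h.dotProduct_eq_of_sum_dotProduct_eq (hz j).2 (fun i' => (hξx i').2)
      (by rw [dotProduct_comm]; exact dotProduct_eq_of_mem_dualFace (hz j).1 hG) i
  rw [dotProduct_sum, Finset.sum_congr rfl fun j _ => hxz j]
  simp

theorem dualFace_subset_convexHull (h : NefPairing Δ Nb)
    (hcNb : polarDual (minkowskiSum Nb) ⊆ convexHull ℝ (⋃ i, Δ i)) {F : Set (Fin n → ℝ)}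
    {y₀ : Fin n → ℝ} (hy₀ : y₀ ∈ minkowskiSum Nb)
    (hF : dualFace (minkowskiSum Nb) F = dualFace (minkowskiSum Nb) {y₀}) :
    dualFace (minkowskiSum Nb) F ⊆ convexHull ℝ (⋃ i, dualFace (minkowskiSum Nb) F ∩ Δ i) := by
  intro x hx
  rw [hF, mem_dualFace_singleton] at hx
  have hhull : x ∈ convexHull ℝ (⋃ i, Δ i) ∩ {p | (dotProductBilin ℝ ℝ).flip y₀ p = -1} :=
    ⟨hcNb hx.1, hx.2⟩
  rw [convexHull_inter_hyperplane _ fun p hp => ?_] at hhull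
  · refine convexHull_mono ?_ hhull
    rintro p ⟨hp, hpy₀⟩
    obtain ⟨i, hpi⟩ := Set.mem_iUnion.mp hp
    exact Set.mem_iUnion.mpr
      ⟨i, hF ▸ mem_dualFace_singleton.mpr ⟨h.subset_polarDual i hpi, hpy₀⟩, hpi⟩
  · obtain ⟨i, hpi⟩ := Set.mem_iUnion.mp hp
    exact h.subset_polarDual i hpi y₀ hy₀

theorem mirrorFace_mirrorFace_subset (h : NefPairing Δ Nb)
    (hcNb : polarDual (minkowskiSum Nb) ⊆ convexHull ℝ (⋃ i, Δ i)) {F : Set (Fin n → ℝ)}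
    {u y₀ : Fin n → ℝ} (hu : u ∈ polarDual (minkowskiSum Nb))
    (hFu : F = {y ∈ minkowskiSum Nb | u ⬝ᵥ y = -1}) (hy₀ : y₀ ∈ minkowskiSum Nb)
    (hF : dualFace (minkowskiSum Nb) F = dualFace (minkowskiSum Nb) {y₀})
    {ξ : Fin c → Fin n → ℝ} (hξ : ∀ i, ξ i ∈ dualFace (minkowskiSum Nb) F ∩ Δ i) :
    mirrorFace (minkowskiSum Δ) Nb (mirrorFace (minkowskiSum Nb) Δ F) ⊆ F := by
  intro y hy
  have huF : u ∈ dualFace (minkowskiSum Nb) F := ⟨hu, fun y hy => (hFu ▸ hy).2⟩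
  have hhyper : convexHull ℝ (⋃ i, dualFace (minkowskiSum Nb) F ∩ Δ i) ⊆
      {x | (dotProductBilin ℝ ℝ).flip y x = -1} := by
    refine convexHull_min (fun x hx => ?_) (convex_hyperplane (LinearMap.isLinear _) _)
    obtain ⟨i, hxi⟩ := Set.mem_iUnion.mp hx
    exact h.dotProduct_eq_of_mem_mirrorFace_mirrorFace hξ hxi hy
  rw [hFu]
  exact ⟨mirrorFace_subset hy, hhyper (h.dualFace_subset_convexHull hcNb hy₀ hF huF)⟩

theorem mirrorFace_mem_admissibleFaces (h : NefPairing Δ Nb)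
    (hN : ∃ T : Finset (Fin n → ℝ), minkowskiSum Nb = convexHull ℝ (T : Set (Fin n → ℝ)))
    (hNint : (0 : Fin n → ℝ) ∈ interior (minkowskiSum Nb))
    (hDint : (0 : Fin n → ℝ) ∈ interior (minkowskiSum Δ))
    (hcNb : polarDual (minkowskiSum Nb) ⊆ convexHull ℝ (⋃ i, Δ i))
    {F : Set (Fin n → ℝ)} (hF : F ∈ admissibleFaces (minkowskiSum Nb) Δ) :
    mirrorFace (minkowskiSum Nb) Δ F ∈ admissibleFaces (minkowskiSum Δ) Nb ∧
      mirrorFace (minkowskiSum Δ) Nb (mirrorFace (minkowskiSum Nb) Δ F) = F := by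
  obtain ⟨hface, hne, hproper, hpieces⟩ := hF
  obtain ⟨u, hu, hFu⟩ := IsFaceOf.exists_polarDual_eq hNint hface hne hproper
  obtain ⟨T, hT⟩ := hN
  obtain ⟨y₀, hy₀F, hy₀⟩ := exists_dualFace_eq_dualFace_singleton hT hu hFu hne
  have hFN : F ⊆ minkowskiSum Nb := hFu ▸ Set.sep_subset _ _
  choose ξ hξ _ using hpieces
  have hGne : (mirrorFace (minkowskiSum Nb) Δ F).Nonempty := ⟨∑ i, ξ i, ξ, hξ, rfl⟩
  have hc : c ≠ 0 := by
    rintro rfl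
    rw [minkowskiSum_fin_zero] at hFN hproper
    exact hproper (hne.subset_singleton_iff.mp hFN)
  refine ⟨⟨h.isFaceOf_mirrorFace (hFN hy₀F) hy₀ hGne, hGne,
    mirrorFace_ne hc hne (interior_subset hDint),
    h.exists_ne_zero_mem_dualFace_mirrorFace hFN hne hGne⟩, subset_antisymm
    (h.mirrorFace_mirrorFace_subset hcNb hu hFu (hFN hy₀F) hy₀ hξ)
    (h.subset_mirrorFace_mirrorFace hFN)⟩

end NefPairing

end Polytope

theorem mirror_map_inclusion_reversing_bijection_general {n c : ℕ}
    (Δ Nb : Fin c → Set (Fin n → ℝ))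
    (hΔlat : ∀ i, IsLatticePolytope (Δ i))
    (hNblat : ∀ j, IsLatticePolytope (Nb j))
    -- (a) the pairing inequalities ⟨x, y⟩ ≥ -δ_{ij}
    (hpair : ∀ i j, ∀ x ∈ Δ i, ∀ y ∈ Nb j,
      -(if i = j then (1 : ℝ) else 0) ≤ ∑ k, x k * y k)
    (ΔS : Set (Fin n → ℝ)) (hΔS : ΔS = minkowskiSum Δ)
    (NbS : Set (Fin n → ℝ)) (hNbS : NbS = minkowskiSum Nb)
    -- (b) the Minkowski sums Δ and ∇ are reflexive
    (hΔint : (0 : Fin n → ℝ) ∈ interior ΔS)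
    (hNbint : (0 : Fin n → ℝ) ∈ interior NbS)
    -- (c) Δ* = conv(∇₁ ∪ … ∪ ∇_c) and ∇* = conv(Δ₁ ∪ … ∪ Δ_c)
    (hcΔ : polarDual ΔS = convexHull ℝ (⋃ j, Nb j))
    (hcNb : polarDual NbS = convexHull ℝ (⋃ i, Δ i))
    -- the set of nonempty proper faces F of ∇ with F^∨ ∩ Δ_i ≠ {0} for all i
    (A : Set (Set (Fin n → ℝ)))
    (hA : A = {F | IsFaceOf NbS F ∧ F.Nonempty ∧ F ≠ NbS ∧
      ∀ i, ∃ x ∈ dualFace NbS F ∩ Δ i, x ≠ 0})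
    -- the set of nonempty proper faces G of Δ with G^∨ ∩ ∇_j ≠ {0} for all j
    (B : Set (Set (Fin n → ℝ)))
    (hB : B = {G | IsFaceOf ΔS G ∧ G.Nonempty ∧ G ≠ ΔS ∧
      ∀ j, ∃ y ∈ dualFace ΔS G ∩ Nb j, y ≠ 0})
    -- the map F ↦ (F^∨ ∩ Δ₁) + ⋯ + (F^∨ ∩ Δ_c)
    (Φ : Set (Fin n → ℝ) → Set (Fin n → ℝ))
    (hΦ : Φ = fun F => minkowskiSum (fun i => dualFace NbS F ∩ Δ i)) :
    Set.BijOn Φ A B ∧ ∀ F ∈ A, ∀ F' ∈ A, (F ⊆ F' ↔ Φ F' ⊆ Φ F) := by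
  subst hΔS hNbS hA hB hΦ
  have hpair : NefPairing Δ Nb := hpair
  have hmirror := fun F (hF : F ∈ admissibleFaces _ Δ) =>
    hpair.mirrorFace_mem_admissibleFaces (exists_finset_minkowskiSum_eq_convexHull
      fun j => (hNblat j).exists_finset) hNbint hΔint hcNb.le hF
  have hmirror' := fun G (hG : G ∈ admissibleFaces _ Nb) =>
    hpair.symm.mirrorFace_mem_admissibleFaces (exists_finset_minkowskiSum_eq_convexHull
      fun i => (hΔlat i).exists_finset) hΔint hNbint hcΔ.le hG
  refine ⟨Set.InvOn.bijOn ⟨fun F hF => (hmirror F hF).2, fun G hG => (hmirror' G hG).2⟩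
    (fun F hF => (hmirror F hF).1) fun G hG => (hmirror' G hG).1,
    fun F hF F' hF' => ⟨mirrorFace_anti, fun hΦ => ?_⟩⟩
  rw [← (hmirror F hF).2, ← (hmirror F' hF').2]
  exact mirrorFace_anti hΦ

/-- The mirror map for the canonical degeneration of a nef complete
intersection: for dual nef partition data `Δ₁,…,Δ_c` and `∇₁,…,∇_c` with
reflexive Minkowski sums `Δ` and `∇`, the assignment
`F ↦ (F^∨ ∩ Δ₁) + ⋯ + (F^∨ ∩ Δ_c)` is an inclusion-reversing bijection from
the nonempty proper faces `F` of `∇` with `F^∨ ∩ Δ_i ≠ {0}` for all `i` onto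
the nonempty proper faces `G` of `Δ` with `G^∨ ∩ ∇_j ≠ {0}` for all `j`. -/
theorem mirror_map_inclusion_reversing_bijection {n c : ℕ}
    (Δ Nb : Fin c → Set (Fin n → ℝ))
    (hΔlat : ∀ i, IsLatticePolytope (Δ i))
    (hNblat : ∀ j, IsLatticePolytope (Nb j))
    (hΔ0 : ∀ i, (0 : Fin n → ℝ) ∈ Δ i) (hNb0 : ∀ j, (0 : Fin n → ℝ) ∈ Nb j)
    -- (a) the pairing inequalities ⟨x, y⟩ ≥ -δ_{ij}
    (hpair : ∀ i j, ∀ x ∈ Δ i, ∀ y ∈ Nb j,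
      -(if i = j then (1 : ℝ) else 0) ≤ ∑ k, x k * y k)
    (ΔS : Set (Fin n → ℝ)) (hΔS : ΔS = minkowskiSum Δ)
    (NbS : Set (Fin n → ℝ)) (hNbS : NbS = minkowskiSum Nb)
    -- (b) the Minkowski sums Δ and ∇ are reflexive
    (hΔint : (0 : Fin n → ℝ) ∈ interior ΔS)
    (hNbint : (0 : Fin n → ℝ) ∈ interior NbS)
    (hΔduallat : IsLatticePolytope (polarDual ΔS))
    (hNbduallat : IsLatticePolytope (polarDual NbS))
    -- (c) Δ* = conv(∇₁ ∪ … ∪ ∇_c) and ∇* = conv(Δ₁ ∪ … ∪ Δ_c)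
    (hcΔ : polarDual ΔS = convexHull ℝ (⋃ j, Nb j))
    (hcNb : polarDual NbS = convexHull ℝ (⋃ i, Δ i))
    -- the set of nonempty proper faces F of ∇ with F^∨ ∩ Δ_i ≠ {0} for all i
    (A : Set (Set (Fin n → ℝ)))
    (hA : A = {F | IsFaceOf NbS F ∧ F.Nonempty ∧ F ≠ NbS ∧
      ∀ i, ∃ x ∈ dualFace NbS F ∩ Δ i, x ≠ 0})
    -- the set of nonempty proper faces G of Δ with G^∨ ∩ ∇_j ≠ {0} for all j
    (B : Set (Set (Fin n → ℝ)))
    (hB : B = {G | IsFaceOf ΔS G ∧ G.Nonempty ∧ G ≠ ΔS ∧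
      ∀ j, ∃ y ∈ dualFace ΔS G ∩ Nb j, y ≠ 0})
    -- the map F ↦ (F^∨ ∩ Δ₁) + ⋯ + (F^∨ ∩ Δ_c)
    (Φ : Set (Fin n → ℝ) → Set (Fin n → ℝ))
    (hΦ : Φ = fun F => minkowskiSum (fun i => dualFace NbS F ∩ Δ i)) :
    Set.BijOn Φ A B ∧ ∀ F ∈ A, ∀ F' ∈ A, (F ⊆ F' ↔ Φ F' ⊆ Φ F) :=
  mirror_map_inclusion_reversing_bijection_general Δ Nb hΔlat hNblat hpair ΔS hΔS NbS hNbS hΔint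
    hNbint hcΔ hcNb A hA B hB Φ hΦ
end
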